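/- arXiv:0807.1552 — 6 statements merged into one kernel-verified Lean document; each statement's English description precedes it below -/
import Mathlib

section
/- Every abelian subgroup S of the normalizer N = T ∪ Tσ of the diagonal torus T in SL₂(F) that is not contained in T satisfies S ∩ T ⊆ {1, -1}, and moreover S ⊆ {1, -1, tσ, -tσ} for some t ∈ T. -/
open Matrix

/-- The matrix σ = [[0,1],[-1,0]] as an element of SL₂(F). -/
def sigmaSL (F : Type*) [Field F] : Matrix.SpecialLinearGroup (Fin 2) F :=
  ⟨!![0, 1; -1, 0], by simp [Matrix.det_fin_two_of]⟩

/-- The diagonal matrix diag(λ, λ⁻¹) as an element of SL₂(F). -/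
def torusSL (F : Type*) [Field F] (l : Fˣ) : Matrix.SpecialLinearGroup (Fin 2) F :=
  ⟨!![(l : F), 0; 0, ((l⁻¹ : Fˣ) : F)], by simp [Matrix.det_fin_two_of]⟩

/-- The diagonal torus T of SL₂(F), as a set. -/
def torusSet (F : Type*) [Field F] : Set (Matrix.SpecialLinearGroup (Fin 2) F) :=
  {g | ∃ l : Fˣ, g = torusSL F l}

/-- The set N = T ∪ Tσ, the normalizer of the diagonal torus in SL₂(F). -/
def normSet (F : Type*) [Field F] : Set (Matrix.SpecialLinearGroup (Fin 2) F) :=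
  torusSet F ∪ ((fun t => t * sigmaSL F) '' torusSet F)

instance : Fact (Even (Fintype.card (Fin 2))) := ⟨by simp⟩

/-!
Conjugation by σ inverts the torus: σ t σ⁻¹ = t⁻¹. Hence a torus element t commutes with an
element sσ of Tσ iff t s σ = s t⁻¹ σ, i.e. iff t² = 1, i.e. t = ±1. So if the abelian group S
contains some s = t₀σ, then S ∩ T ⊆ {±1}; and any other x ∈ S ∩ Tσ has x s⁻¹ ∈ S ∩ T, so x = ±s.
-/

section Torus

variable {F : Type*} [Field F]

theorem torusSL_mul (a b : Fˣ) : torusSL F (a * b) = torusSL F a * torusSL F b := by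
  apply Subtype.ext
  rw [Matrix.SpecialLinearGroup.coe_mul]
  simp [torusSL, mul_comm]

theorem torusSL_one : torusSL F 1 = 1 := by
  ext i j
  fin_cases i <;> fin_cases j <;> simp [torusSL]

theorem torusSL_neg_one : torusSL F (-1) = -1 := by
  ext i j
  fin_cases i <;> fin_cases j <;> simp [torusSL]

theorem torusSL_inv (l : Fˣ) : torusSL F l⁻¹ = (torusSL F l)⁻¹ :=
  eq_inv_of_mul_eq_one_left <| by rw [← torusSL_mul, inv_mul_cancel, torusSL_one]

theorem torusSL_injective : Function.Injective (torusSL F) := fun a b h =>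
  Units.ext <| by simpa [torusSL] using congrArg (fun g : SpecialLinearGroup (Fin 2) F => g 0 0) h

theorem sigmaSL_mul_torusSL (l : Fˣ) : sigmaSL F * torusSL F l = torusSL F l⁻¹ * sigmaSL F := by
  apply Subtype.ext
  rw [Matrix.SpecialLinearGroup.coe_mul, Matrix.SpecialLinearGroup.coe_mul]
  simp [torusSL, sigmaSL]

theorem torusSL_eq_one_or_neg_one_of_commute {l m : Fˣ}
    (h : Commute (torusSL F l) (torusSL F m * sigmaSL F)) :
    torusSL F l = 1 ∨ torusSL F l = -1 := by
  have hσ : torusSL F (l * m) * sigmaSL F = torusSL F (m * l⁻¹) * sigmaSL F := by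
    simpa only [torusSL_mul, mul_assoc, sigmaSL_mul_torusSL] using h.eq
  have hl : l⁻¹ = l := by
    have := torusSL_injective (mul_right_cancel hσ)
    rw [mul_comm m] at this
    exact (mul_right_cancel this).symm
  rcases (Units.inv_eq_self_iff l).mp hl with rfl | rfl
  · exact .inl torusSL_one
  · exact .inr torusSL_neg_one

theorem torusSL_mul_sigmaSL_mul_inv (l m : Fˣ) :
    torusSL F l * sigmaSL F * (torusSL F m * sigmaSL F)⁻¹ = torusSL F (l * m⁻¹) := by
  rw [torusSL_mul, torusSL_inv, _root_.mul_inv_rev, mul_assoc, mul_inv_cancel_left]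

end Torus

theorem abelian_subgroup_of_normalizer_general {F : Type*} [Field F]
    (S : Subgroup (Matrix.SpecialLinearGroup (Fin 2) F))
    (habelian : ∀ a ∈ S, ∀ b ∈ S, a * b = b * a)
    (hsub : (S : Set (Matrix.SpecialLinearGroup (Fin 2) F)) ⊆ normSet F)
    (hnot : ¬ (S : Set (Matrix.SpecialLinearGroup (Fin 2) F)) ⊆ torusSet F) :
    (S : Set (Matrix.SpecialLinearGroup (Fin 2) F)) ∩ torusSet F ⊆ {1, -1} ∧
    ∃ t ∈ torusSet F, (S : Set (Matrix.SpecialLinearGroup (Fin 2) F)) ⊆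
      {1, -1, t * sigmaSL F, -(t * sigmaSL F)} := by
  obtain ⟨s, hs, hsT⟩ := Set.not_subset.mp hnot
  obtain hsT' | ⟨_, ⟨m, rfl⟩, rfl⟩ := hsub hs
  · exact absurd hsT' hsT
  have hT : ∀ x ∈ S, x ∈ torusSet F → x = 1 ∨ x = -1 := by
    rintro _ hx ⟨l, rfl⟩
    exact torusSL_eq_one_or_neg_one_of_commute (habelian _ hx _ hs)
  refine ⟨fun x ⟨hx, hxT⟩ => hT x hx hxT, torusSL F m, ⟨m, rfl⟩, fun x hx => ?_⟩
  obtain hxT | ⟨_, ⟨l, rfl⟩, rfl⟩ := hsub hx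
  · rcases hT x hx hxT with rfl | rfl <;> simp
  · have hquot := hT _ (S.mul_mem hx (S.inv_mem hs)) ⟨l * m⁻¹, torusSL_mul_sigmaSL_mul_inv l m⟩
    rcases hquot with h | h
    · simp [mul_inv_eq_one.mp h]
    · simp [mul_inv_eq_iff_eq_mul.mp h]

/-- An abelian subgroup S of N = T ∪ Tσ not contained in T satisfies S ∩ T ⊆ {1,-1},
and S ⊆ {1, -1, tσ, -tσ} for some t ∈ T. -/
theorem abelian_subgroup_of_normalizer {F : Type*} [Field F] [IsAlgClosed F] [CharZero F]
    (S : Subgroup (Matrix.SpecialLinearGroup (Fin 2) F))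
    (habelian : ∀ a ∈ S, ∀ b ∈ S, a * b = b * a)
    (hsub : (S : Set (Matrix.SpecialLinearGroup (Fin 2) F)) ⊆ normSet F)
    (hnot : ¬ (S : Set (Matrix.SpecialLinearGroup (Fin 2) F)) ⊆ torusSet F) :
    (S : Set (Matrix.SpecialLinearGroup (Fin 2) F)) ∩ torusSet F ⊆ {1, -1} ∧
    ∃ t ∈ torusSet F, (S : Set (Matrix.SpecialLinearGroup (Fin 2) F)) ⊆
      {1, -1, t * sigmaSL F, -(t * sigmaSL F)} :=
  abelian_subgroup_of_normalizer_general S habelian hsub hnot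
end

section
/- The automorphism group of the Kaplansky superalgebra K is isomorphic to SL₂(F): a linear map fixing e and acting on the odd part span{x,y} by an invertible matrix A is an automorphism of K if and only if det A = 1. -/
open Matrix BigOperators

variable {F : Type*} [Field F]

/-- The Kaplansky superalgebra K, with basis e = (1,0,0) (even), x = (0,1,0), y = (0,0,1)
(odd), and multiplication e² = e, ex = xe = x/2, ey = ye = y/2, xy = e = -yx, x² = y² = 0. -/
def kMul (a b : Fin 3 → F) : Fin 3 → F :=
  ![a 0 * b 0 + a 1 * b 2 - a 2 * b 1,
    (a 0 * b 1 + a 1 * b 0) / 2,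
    (a 0 * b 2 + a 2 * b 0) / 2]

/-- The basis element e of K. -/
def eK : Fin 3 → F := ![1, 0, 0]

/-- The basis element x of K. -/
def xK : Fin 3 → F := ![0, 1, 0]

/-- The basis element y of K. -/
def yK : Fin 3 → F := ![0, 0, 1]

/-- The even part K₀ = Fe of the Kaplansky superalgebra. -/
def kEven : Set (Fin 3 → F) := {a | a 1 = 0 ∧ a 2 = 0}

/-- The odd part K₁ = Fx ⊕ Fy of the Kaplansky superalgebra. -/
def kOdd : Set (Fin 3 → F) := {a | a 0 = 0}

/-- The linear map fixing e and acting on the odd part span{x,y} by the invertible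
matrix A. -/
def kMapOfMatrix (A : Matrix (Fin 2) (Fin 2) F) (a : Fin 3 → F) : Fin 3 → F :=
  ![a 0, A 0 0 * a 1 + A 0 1 * a 2, A 1 0 * a 1 + A 1 1 * a 2]

/-- A linear map fixing e and acting on the odd part by an invertible matrix A is an
automorphism of the Kaplansky superalgebra if and only if det A = 1; hence
Aut(K) ≅ SL₂(F). -/
theorem kaplansky_aut_iff_det_one {F : Type*} [Field F] (h2 : (2 : F) ≠ 0)
    (A : Matrix (Fin 2) (Fin 2) F) (hA : IsUnit A.det) :
    (∀ a b : Fin 3 → F, kMapOfMatrix A (kMul a b) =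
      kMul (kMapOfMatrix A a) (kMapOfMatrix A b)) ↔ A.det = 1 := by
  constructor
  · intro h
    have := congrFun (h xK yK) 0
    simp [kMul, kMapOfMatrix, xK, yK] at this
    rw [Matrix.det_fin_two]
    linear_combination -this
  · intro hd a b
    rw [Matrix.det_fin_two] at hd
    funext i
    fin_cases i
    · simp [kMul, kMapOfMatrix]
      linear_combination (a 2 * b 1 - a 1 * b 2) * hd
    · simp [kMul, kMapOfMatrix]
      ring
    · simp [kMul, kMapOfMatrix]
      ring
end

section
/- Up to equivalence, the only nontrivial group gradings on the Kaplansky superalgebra K compatible with its superalgebra structure are: the ℤ₂-grading K = K₀ ⊕ K₁ with K₀ = Fe, K₁ = Fx ⊕ Fy, and the fine ℤ-grading K = K^{-1} ⊕ K⁰ ⊕ K¹ with K^{-1} = Fx, K⁰ = Fe, K¹ = Fy. -/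
open Matrix BigOperators

variable {F : Type*} [Field F]

/-- The even part Fe as a submodule. -/
def kEvenSub (F : Type*) [Field F] : Submodule F (Fin 3 → F) := Submodule.span F {eK}

/-- The odd part Fx ⊕ Fy as a submodule. -/
def kOddSub (F : Type*) [Field F] : Submodule F (Fin 3 → F) := Submodule.span F {xK, yK}

lemma vec3_eq_zero {a : Fin 3 → F} (h0 : a 0 = 0) (h1 : a 1 = 0) (h2 : a 2 = 0) : a = 0 := by
  funext i; fin_cases i <;> assumption

lemma vec3_ext {a b : Fin 3 → F} (h0 : a 0 = b 0) (h1 : a 1 = b 1) (h2 : a 2 = b 2) :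
    a = b := by
  funext i; fin_cases i <;> assumption

lemma mem_evenSub {a : Fin 3 → F} : a ∈ kEvenSub F ↔ a 1 = 0 ∧ a 2 = 0 := by
  constructor
  · intro h
    rw [kEvenSub, Submodule.mem_span_singleton] at h
    obtain ⟨c, rfl⟩ := h
    simp [eK]
  · rintro ⟨h1, h2⟩
    rw [kEvenSub, Submodule.mem_span_singleton]
    exact ⟨a 0, by funext i; fin_cases i <;> simp [eK, h1, h2]⟩

lemma mem_oddSub {a : Fin 3 → F} : a ∈ kOddSub F ↔ a 0 = 0 := by
  constructor
  · intro h
    rw [kOddSub, Submodule.mem_span_pair] at h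
    obtain ⟨m, n, rfl⟩ := h
    simp [xK, yK]
  · intro h0
    rw [kOddSub, Submodule.mem_span_pair]
    exact ⟨a 1, a 2, by funext i; fin_cases i <;> simp [xK, yK, h0]⟩

lemma kMul_odd {a b : Fin 3 → F} (ha : a 0 = 0) (hb : b 0 = 0) :
    kMul a b = (a 1 * b 2 - a 2 * b 1) • eK := by
  funext i; fin_cases i <;> simp [kMul, eK, ha, hb]

lemma kMul_ee : kMul (eK : Fin 3 → F) eK = eK := by
  funext i; fin_cases i <;> simp [kMul, eK]

/-- auxiliary linear map acting on the odd part by a 2x2 matrix, fixing e -/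
def kLin (p q r s : F) : (Fin 3 → F) →ₗ[F] (Fin 3 → F) where
  toFun a := ![a 0, p * a 1 + q * a 2, r * a 1 + s * a 2]
  map_add' a b := by funext i; fin_cases i <;> simp <;> ring
  map_smul' c a := by funext i; fin_cases i <;> simp <;> ring

lemma kLin_apply (p q r s : F) (a : Fin 3 → F) :
    kLin p q r s a = ![a 0, p * a 1 + q * a 2, r * a 1 + s * a 2] := rfl

lemma kLin_comp1 {u v : Fin 3 → F} (hd : u 1 * v 2 - u 2 * v 1 = 1) :
    ∀ a, kLin (v 2) (-v 1) (-(u 2)) (u 1) (kLin (u 1) (v 1) (u 2) (v 2) a) = a := by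
  intro a
  funext i
  simp only [kLin_apply]
  fin_cases i
  · simp
  · simp; linear_combination (a 1) * hd
  · simp; linear_combination (a 2) * hd

lemma kLin_comp2 {u v : Fin 3 → F} (hd : u 1 * v 2 - u 2 * v 1 = 1) :
    ∀ a, kLin (u 1) (v 1) (u 2) (v 2) (kLin (v 2) (-v 1) (-(u 2)) (u 1) a) = a := by
  intro a
  funext i
  simp only [kLin_apply]
  fin_cases i
  · simp
  · simp; linear_combination (a 1) * hd
  · simp; linear_combination (a 2) * hd

lemma kLin_mul {u v : Fin 3 → F} (hd : u 1 * v 2 - u 2 * v 1 = 1) (a b : Fin 3 → F) :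
    kLin (v 2) (-v 1) (-(u 2)) (u 1) (kMul a b) =
      kMul (kLin (v 2) (-v 1) (-(u 2)) (u 1) a) (kLin (v 2) (-v 1) (-(u 2)) (u 1) b) := by
  funext i
  simp only [kLin_apply, kMul]
  fin_cases i
  · simp; linear_combination -(a 1 * b 2 - a 2 * b 1) * hd
  · simp; ring
  · simp; ring

/-- every vector decomposes into per-degree even and odd pieces -/
lemma ev_od_decomp {G : Type*} [CommGroup G] [DecidableEq G] (comp : G → Submodule F (Fin 3 → F))
    (hinternal : DirectSum.IsInternal comp)
    (hcompat : ∀ g, comp g = (comp g ⊓ kEvenSub F) ⊔ (comp g ⊓ kOddSub F))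
    (w : Fin 3 → F) :
    ∃ (s : Finset G) (ev od : G → (Fin 3 → F)),
      (∀ g, ev g ∈ comp g ∧ ev g ∈ kEvenSub F ∧ od g ∈ comp g ∧ od g ∈ kOddSub F) ∧
      w = (∑ g ∈ s, ev g) + (∑ g ∈ s, od g) := by
  classical
  have htop : w ∈ iSup comp := by
    rw [hinternal.submodule_iSup_eq_top]; trivial
  obtain ⟨f, hf, hsum⟩ := (Submodule.mem_iSup_iff_exists_finsupp comp w).mp htop
  have hsplit : ∀ g : G, ∃ p q : Fin 3 → F,
      (p ∈ comp g ∧ p ∈ kEvenSub F) ∧ (q ∈ comp g ∧ q ∈ kOddSub F) ∧ p + q = f g := by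
    intro g
    have : f g ∈ (comp g ⊓ kEvenSub F) ⊔ (comp g ⊓ kOddSub F) := by
      rw [← hcompat g]; exact hf g
    obtain ⟨p, hp, q, hq, hpq⟩ := Submodule.mem_sup.mp this
    exact ⟨p, q, ⟨hp.1, hp.2⟩, ⟨hq.1, hq.2⟩, hpq⟩
  choose ev od hev hod hevod using hsplit
  refine ⟨f.support, ev, od, fun g => ⟨(hev g).1, (hev g).2, (hod g).1, (hod g).2⟩, ?_⟩
  rw [← hsum, Finsupp.sum, ← Finset.sum_add_distrib]
  exact (Finset.sum_congr rfl fun g _ => (hevod g).symm)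

/-- Up to equivalence, the only nontrivial group gradings on the Kaplansky superalgebra
compatible with its superalgebra structure are the ℤ₂-grading K = Fe ⊕ (Fx ⊕ Fy) and the
fine ℤ-grading K = Fx ⊕ Fe ⊕ Fy: after applying a suitable superalgebra automorphism,
the set of nonzero homogeneous components is either {Fe, Fx ⊕ Fy} or {Fx, Fe, Fy}. -/
theorem kaplansky_gradings_classification {F : Type*} [Field F] [IsAlgClosed F] [CharZero F]
    (G : Type*) [CommGroup G] [DecidableEq G] [Group.FG G]
    (comp : G → Submodule F (Fin 3 → F))
    (hinternal : DirectSum.IsInternal comp)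
    (hmul : ∀ (g h : G) (a b : Fin 3 → F),
      a ∈ comp g → b ∈ comp h → kMul a b ∈ comp (g * h))
    (hcompat : ∀ g, comp g = (comp g ⊓ kEvenSub F) ⊔ (comp g ⊓ kOddSub F))
    (hnontrivial : ∃ g : G, g ≠ 1 ∧ comp g ≠ ⊥) :
    ∃ φ : (Fin 3 → F) ≃ₗ[F] (Fin 3 → F),
      (∀ a b, φ (kMul a b) = kMul (φ a) (φ b)) ∧
      (kEvenSub F).map (φ : (Fin 3 → F) →ₗ[F] (Fin 3 → F)) = kEvenSub F ∧
      (kOddSub F).map (φ : (Fin 3 → F) →ₗ[F] (Fin 3 → F)) = kOddSub F ∧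
      ({S : Submodule F (Fin 3 → F) | ∃ g, comp g ≠ ⊥ ∧
          S = (comp g).map (φ : (Fin 3 → F) →ₗ[F] (Fin 3 → F))} =
        {kEvenSub F, kOddSub F} ∨
       {S : Submodule F (Fin 3 → F) | ∃ g, comp g ≠ ⊥ ∧
          S = (comp g).map (φ : (Fin 3 → F) →ₗ[F] (Fin 3 → F))} =
        {Submodule.span F {xK}, Submodule.span F {eK}, Submodule.span F {yK}}) := by
  classical
  have heKne : (eK : Fin 3 → F) ≠ 0 := by
    intro h; have := congrFun h 0; simp [eK] at this
  have hxKne : (xK : Fin 3 → F) ≠ 0 := by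
    intro h; have := congrFun h 1; simp [xK] at this
  have hEne : kEvenSub F ≠ ⊥ := by
    intro h
    rw [Submodule.eq_bot_iff] at h
    exact heKne (h eK (Submodule.mem_span_singleton_self eK))
  have hOne : kOddSub F ≠ ⊥ := by
    intro h
    rw [Submodule.eq_bot_iff] at h
    exact hxKne (h xK (Submodule.subset_span (by simp)))
  -- disjointness of components
  have hdisj : ∀ {g h : G}, g ≠ h → ∀ a : Fin 3 → F, a ∈ comp g → a ∈ comp h → a = 0 := by
    intro g h hgh a hag hah
    have hd := hinternal.submodule_iSupIndep.pairwiseDisjoint hgh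
    exact Submodule.disjoint_def.mp hd a hag hah
  have huniq : ∀ {g h : G} (a : Fin 3 → F), a ≠ 0 → a ∈ comp g → a ∈ comp h → g = h := by
    intro g h a ha hg hh; by_contra hne; exact ha (hdisj hne a hg hh)
  have hdec := ev_od_decomp comp hinternal hcompat
  -- e lies in the component of some g₀, and g₀ = 1
  obtain ⟨g₀, heg₀⟩ : ∃ g, (eK : Fin 3 → F) ∈ comp g := by
    obtain ⟨s, ev, od, hprops, hsum⟩ := hdec eK
    have hodsum : (∑ g ∈ s, od g) ∈ kOddSub F :=
      Submodule.sum_mem _ fun g _ => (hprops g).2.2.2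
    have hevsum : (∑ g ∈ s, ev g) ∈ kEvenSub F :=
      Submodule.sum_mem _ fun g _ => (hprops g).2.1
    have hoz : (∑ g ∈ s, od g) = 0 := by
      have h2 := mem_evenSub.mp hevsum
      refine vec3_eq_zero (mem_oddSub.mp hodsum) ?_ ?_
      · have h := congrFun hsum 1
        rw [Pi.add_apply, h2.1, zero_add] at h
        rw [← h]; simp [eK]
      · have h := congrFun hsum 2
        rw [Pi.add_apply, h2.2, zero_add] at h
        rw [← h]; simp [eK]
    rw [hoz, add_zero] at hsum
    have h0 : (∑ g ∈ s, (ev g) 0) = 1 := by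
      have h := congrFun hsum 0
      rw [Finset.sum_apply] at h
      rw [← h]; simp [eK]
    obtain ⟨g, hgs, hgne⟩ := Finset.exists_ne_zero_of_sum_ne_zero
      (h0 ▸ (one_ne_zero : (1 : F) ≠ 0))
    have hev := mem_evenSub.mp (hprops g).2.1
    set c : F := ev g 0 with hcdef
    have hevg : ev g = c • eK := by
      funext i; fin_cases i <;> simp [eK, hev.1, hev.2, hcdef]
    have heq : (eK : Fin 3 → F) = c⁻¹ • ev g := by
      rw [hevg, smul_smul, inv_mul_cancel₀ hgne, one_smul]
    exact ⟨g, heq ▸ Submodule.smul_mem _ _ (hprops g).1⟩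
  have he1 : (eK : Fin 3 → F) ∈ comp 1 := by
    have h2 : (eK : Fin 3 → F) ∈ comp (g₀ * g₀) := by
      have := hmul g₀ g₀ eK eK heg₀ heg₀; rwa [kMul_ee] at this
    have h3 : g₀ * g₀ = g₀ := huniq eK heKne h2 heg₀
    have h4 : g₀ * g₀ = g₀ * 1 := by rw [mul_one, h3]
    have : g₀ = 1 := mul_left_cancel h4
    rwa [this] at heg₀
  -- a nonzero even element forces degree 1
  have heven_comp : ∀ (g : G) (a : Fin 3 → F), a ∈ comp g → a ∈ kEvenSub F → a ≠ 0 → g = 1 := by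
    intro g a hag hae hne
    have h12 := mem_evenSub.mp hae
    have ha0 : a 0 ≠ 0 := fun h => hne (vec3_eq_zero h h12.1 h12.2)
    have heq : (eK : Fin 3 → F) = (a 0)⁻¹ • a := by
      funext i
      fin_cases i
      · simp [eK, inv_mul_cancel₀ ha0]
      · simp [eK, h12.1]
      · simp [eK, h12.2]
    exact huniq eK heKne (heq ▸ Submodule.smul_mem _ _ hag) he1
  -- products of independent odd elements
  have hoddmul : ∀ (g h : G) (a b : Fin 3 → F), a ∈ comp g → b ∈ comp h → a 0 = 0 → b 0 = 0 →
      a 1 * b 2 - a 2 * b 1 ≠ 0 → g * h = 1 := by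
    intro g h a b hag hbh ha0 hb0 hd
    have hm := hmul g h a b hag hbh
    rw [kMul_odd ha0 hb0] at hm
    refine heven_comp _ _ hm (mem_evenSub.mpr ⟨by simp [eK], by simp [eK]⟩) ?_
    exact smul_ne_zero hd heKne
  -- odd elements in distinct components are independent
  have hwedge : ∀ (g h : G) (a b : Fin 3 → F), g ≠ h → a ∈ comp g → b ∈ comp h →
      a 0 = 0 → b 0 = 0 → a ≠ 0 → b ≠ 0 → a 1 * b 2 - a 2 * b 1 ≠ 0 := by
    intro g h a b hgh hag hbh ha0 hb0 hane hbne hw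
    have hab : a 1 * b 2 = a 2 * b 1 := sub_eq_zero.mp hw
    have hpar : ∃ c : F, b = c • a := by
      by_cases h1 : a 1 = 0
      · have h2 : a 2 ≠ 0 := fun h => hane (vec3_eq_zero ha0 h1 h)
        refine ⟨b 2 / a 2, vec3_ext ?_ ?_ ?_⟩
        · simp [ha0, hb0]
        · have hb1 : b 1 = 0 := by
            have : a 2 * b 1 = 0 := by rw [← hab, h1, zero_mul]
            exact (mul_eq_zero.mp this).resolve_left h2
          simp [h1, hb1]
        · simp [div_mul_cancel₀ _ h2]
      · refine ⟨b 1 / a 1, vec3_ext ?_ ?_ ?_⟩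
        · simp [ha0, hb0]
        · simp [div_mul_cancel₀ _ h1]
        · simp only [Pi.smul_apply, smul_eq_mul]
          rw [div_mul_eq_mul_div, eq_div_iff h1]
          linear_combination hab
    obtain ⟨c, rfl⟩ := hpar
    exact hbne (hdisj hgh (c • a) (Submodule.smul_mem _ _ hag) hbh)
  -- decomposition of odd vectors into odd pieces
  have hodd_dec : ∀ w : Fin 3 → F, w 0 = 0 → ∃ (s : Finset G) (f : G → (Fin 3 → F)),
      (∀ g, f g ∈ comp g ∧ f g 0 = 0) ∧ ∑ g ∈ s, f g = w := by
    intro w hw0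
    obtain ⟨s, ev, od, hprops, hsum⟩ := hdec w
    have hevsum : (∑ g ∈ s, ev g) ∈ kEvenSub F :=
      Submodule.sum_mem _ fun g _ => (hprops g).2.1
    have hodd0 : (∑ g ∈ s, od g) 0 = 0 :=
      mem_oddSub.mp (Submodule.sum_mem _ fun g _ => (hprops g).2.2.2)
    have h12 := mem_evenSub.mp hevsum
    have hevz : (∑ g ∈ s, ev g) = 0 := by
      refine vec3_eq_zero ?_ h12.1 h12.2
      have := congrFun hsum 0
      simp only [Pi.add_apply] at this
      rw [hw0, hodd0] at this
      linear_combination -this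
    refine ⟨s, od, fun g => ⟨(hprops g).2.2.1, mem_oddSub.mp (hprops g).2.2.2⟩, ?_⟩
    rw [hsum, hevz, zero_add]
  -- get a nonzero homogeneous odd element u of degree g₁
  obtain ⟨s₀, f₀, hf₀, hfs₀⟩ := hodd_dec xK (by simp [xK])
  obtain ⟨g₁, hg₁s, hune⟩ := Finset.exists_ne_zero_of_sum_ne_zero (hfs₀ ▸ hxKne)
  set u : Fin 3 → F := f₀ g₁ with hudef
  have hug : u ∈ comp g₁ := (hf₀ g₁).1
  have hu0 : u 0 = 0 := (hf₀ g₁).2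
  -- a companion odd vector independent from u
  obtain ⟨w, hw0, hwu⟩ : ∃ w : Fin 3 → F, w 0 = 0 ∧ u 1 * w 2 - u 2 * w 1 ≠ 0 := by
    by_cases h2 : u 2 = 0
    · have h1 : u 1 ≠ 0 := fun h => hune (vec3_eq_zero hu0 h h2)
      exact ⟨yK, by simp [yK], by simp [yK, h2, h1]⟩
    · exact ⟨xK, by simp [xK], by simpa [xK] using h2⟩
  -- every odd vector splits into comp g₁ and comp g₁⁻¹ parts
  have hsplit : ∀ z : Fin 3 → F, z 0 = 0 → ∃ p q : Fin 3 → F,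
      p ∈ comp g₁ ∧ p 0 = 0 ∧ q ∈ comp g₁⁻¹ ∧ q 0 = 0 ∧ z = p + q := by
    intro z hz0
    obtain ⟨s, f, hf, hfs⟩ := hodd_dec z hz0
    refine ⟨∑ g ∈ s.filter (· = g₁), f g, ∑ g ∈ s.filter (¬ · = g₁), f g, ?_, ?_, ?_, ?_, ?_⟩
    · refine Submodule.sum_mem _ fun g hg => ?_
      obtain ⟨-, rfl⟩ := Finset.mem_filter.mp hg
      exact (hf g).1
    · simp only [Finset.sum_apply]
      exact Finset.sum_eq_zero fun g _ => (hf g).2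
    · refine Submodule.sum_mem _ fun g hg => ?_
      obtain ⟨hgs, hgne⟩ := Finset.mem_filter.mp hg
      by_cases hz : f g = 0
      · rw [hz]; exact Submodule.zero_mem _
      · have hgne' : g₁ ≠ g := fun h => hgne (by simp [h.symm])
        have hwz := hwedge g₁ g u (f g) hgne' hug (hf g).1 hu0 (hf g).2 hune hz
        have hm := hoddmul g₁ g u (f g) hug (hf g).1 hu0 (hf g).2 hwz
        have : g = g₁⁻¹ := (inv_eq_of_mul_eq_one_right hm).symm
        rw [← this]
        exact (hf g).1
    · simp only [Finset.sum_apply]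
      exact Finset.sum_eq_zero fun g _ => (hf g).2
    · rw [← hfs]
      exact (Finset.sum_filter_add_sum_filter_not s (· = g₁) f).symm
  by_cases hsq : g₁ * g₁ = 1
  · -- Case A : ℤ₂-type grading
    have hginv : g₁⁻¹ = g₁ := inv_eq_of_mul_eq_one_right hsq
    have hOall : ∀ z : Fin 3 → F, z 0 = 0 → z ∈ comp g₁ := by
      intro z hz
      obtain ⟨p, q, hp, -, hq, -, rfl⟩ := hsplit z hz
      exact Submodule.add_mem _ hp (hginv ▸ hq)
    have hg₁ne1 : g₁ ≠ 1 := by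
      rintro rfl
      obtain ⟨g', hg'1, hg'⟩ := hnontrivial
      obtain ⟨a, ha, hane⟩ := Submodule.ne_bot_iff _ |>.mp hg'
      have hmem : a ∈ comp 1 := by
        have h1 : (a 0) • (eK : Fin 3 → F) ∈ comp 1 := Submodule.smul_mem _ _ he1
        have h2 : (a - (a 0) • eK) ∈ comp 1 := hOall _ (by simp [eK])
        have := Submodule.add_mem _ h1 h2
        simpa using this
      exact hane (hdisj hg'1 a ha hmem)
    have hcg₁ : comp g₁ = kOddSub F := by
      apply le_antisymm
      · intro a ha
        rw [hcompat g₁] at ha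
        obtain ⟨p, hp, q, hq, rfl⟩ := Submodule.mem_sup.mp ha
        have hpz : p = 0 := by
          by_contra hne
          exact hg₁ne1 (heven_comp g₁ p hp.1 hp.2 hne)
        rw [hpz, zero_add]
        exact hq.2
      · intro a ha
        exact hOall a (mem_oddSub.mp ha)
    have hc1 : comp 1 = kEvenSub F := by
      apply le_antisymm
      · intro a ha
        rw [hcompat 1] at ha
        obtain ⟨p, hp, q, hq, rfl⟩ := Submodule.mem_sup.mp ha
        have hqz : q = 0 := by
          by_contra hne
          have hwz := hwedge 1 g₁ q u (Ne.symm hg₁ne1) hq.1 hug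
            (mem_oddSub.mp hq.2) hu0 hne hune
          have := hoddmul 1 g₁ q u hq.1 hug (mem_oddSub.mp hq.2) hu0 hwz
          exact hg₁ne1 (by rwa [one_mul] at this)
        rw [hqz, add_zero]
        exact hp.2
      · intro a ha
        have h12 := mem_evenSub.mp ha
        have : a = (a 0) • eK := by
          funext i; fin_cases i <;> simp [eK, h12.1, h12.2]
        rw [this]
        exact Submodule.smul_mem _ _ he1
    have hrest : ∀ g : G, g ≠ 1 → g ≠ g₁ → comp g = ⊥ := by
      intro g hne1 hneg₁
      rw [Submodule.eq_bot_iff]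
      intro a ha
      rw [hcompat g] at ha
      obtain ⟨p, hp, q, hq, rfl⟩ := Submodule.mem_sup.mp ha
      have hpz : p = 0 := by
        by_contra hne
        exact hne1 (heven_comp g p hp.1 hp.2 hne)
      have hqz : q = 0 := by
        by_contra hne
        have hwz := hwedge g g₁ q u hneg₁ hq.1 hug (mem_oddSub.mp hq.2) hu0 hne hune
        have hm := hoddmul g g₁ q u hq.1 hug (mem_oddSub.mp hq.2) hu0 hwz
        have : g = g₁⁻¹ := eq_inv_of_mul_eq_one_left hm
        exact hneg₁ (this.trans hginv)
      rw [hpz, hqz, add_zero]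
    refine ⟨LinearEquiv.refl F _, fun a b => rfl, by simp, by simp, Or.inl ?_⟩
    ext S
    simp only [Set.mem_setOf_eq, Set.mem_insert_iff, Set.mem_singleton_iff,
      LinearEquiv.refl_toLinearMap, Submodule.map_id]
    constructor
    · rintro ⟨g, hgne, rfl⟩
      by_cases hg1 : g = 1
      · left; rw [hg1, hc1]
      by_cases hgg : g = g₁
      · right; rw [hgg, hcg₁]
      · exact absurd (hrest g hg1 hgg) hgne
    · rintro (rfl | rfl)
      · exact ⟨1, hc1 ▸ hEne, hc1.symm⟩
      · exact ⟨g₁, hcg₁ ▸ hOne, hcg₁.symm⟩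
  · -- Case B : fine ℤ-type grading
    have hne : g₁ ≠ g₁⁻¹ := by
      intro h
      exact hsq (by nth_rewrite 2 [h]; exact mul_inv_cancel g₁)
    have hg₁ne1 : g₁ ≠ 1 := by
      intro h; exact hne (by rw [h, inv_one])
    have hg₂ne1 : g₁⁻¹ ≠ 1 := by
      intro h; exact hg₁ne1 (by rwa [inv_eq_one] at h)
    obtain ⟨p, q, hpg, hp0, hqg, hq0, hwpq⟩ := hsplit w hw0
    have hqne : q ≠ 0 := by
      intro h
      rw [h, add_zero] at hwpq
      exact hsq (hoddmul g₁ g₁ u w hug (hwpq ▸ hpg) hu0 hw0 hwu)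
    set δ : F := u 1 * q 2 - u 2 * q 1 with hδdef
    have hδne : δ ≠ 0 := hwedge g₁ g₁⁻¹ u q hne hug hqg hu0 hq0 hune hqne
    set v : Fin 3 → F := δ⁻¹ • q with hvdef
    have hvg : v ∈ comp g₁⁻¹ := Submodule.smul_mem _ _ hqg
    have hv0 : v 0 = 0 := by simp [hvdef, hq0]
    have hvne : v ≠ 0 := smul_ne_zero (inv_ne_zero hδne) hqne
    have hd1 : u 1 * v 2 - u 2 * v 1 = 1 := by
      have h1 : u 1 * v 2 - u 2 * v 1 = δ⁻¹ * δ := by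
        simp only [hvdef, Pi.smul_apply, smul_eq_mul, hδdef]; ring
      rw [h1, inv_mul_cancel₀ hδne]
    have hspan : ∀ z : Fin 3 → F, z 0 = 0 → ∃ m n : F, z = m • u + n • v := by
      intro z hz
      refine ⟨v 2 * z 1 - v 1 * z 2, u 1 * z 2 - u 2 * z 1, vec3_ext ?_ ?_ ?_⟩
      · simp [hu0, hv0, hz]
      · simp only [Pi.add_apply, Pi.smul_apply, smul_eq_mul]
        linear_combination -(z 1) * hd1
      · simp only [Pi.add_apply, Pi.smul_apply, smul_eq_mul]
        linear_combination -(z 2) * hd1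
    have hc1 : comp 1 = kEvenSub F := by
      apply le_antisymm
      · intro a ha
        rw [hcompat 1] at ha
        obtain ⟨p', hp', q', hq', rfl⟩ := Submodule.mem_sup.mp ha
        have hqz : q' = 0 := by
          by_contra hneq
          have hwz := hwedge 1 g₁ q' u (Ne.symm hg₁ne1) hq'.1 hug
            (mem_oddSub.mp hq'.2) hu0 hneq hune
          have := hoddmul 1 g₁ q' u hq'.1 hug (mem_oddSub.mp hq'.2) hu0 hwz
          exact hg₁ne1 (by rwa [one_mul] at this)
        rw [hqz, add_zero]
        exact hp'.2
      · intro a ha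
        have h12 := mem_evenSub.mp ha
        have : a = (a 0) • eK := by
          funext i; fin_cases i <;> simp [eK, h12.1, h12.2]
        rw [this]
        exact Submodule.smul_mem _ _ he1
    have hcg : comp g₁ = Submodule.span F {u} := by
      apply le_antisymm
      · intro a ha
        rw [hcompat g₁] at ha
        obtain ⟨p', hp', q', hq', rfl⟩ := Submodule.mem_sup.mp ha
        have hpz : p' = 0 := by
          by_contra hnep
          exact hg₁ne1 (heven_comp g₁ p' hp'.1 hp'.2 hnep)
        obtain ⟨m, n, hmn⟩ := hspan q' (mem_oddSub.mp hq'.2)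
        have hnv : n • v = 0 := by
          have h2 : n • v ∈ comp g₁ := by
            have heq : q' - m • u = n • v := by rw [hmn]; abel
            rw [← heq]
            exact Submodule.sub_mem _ hq'.1 (Submodule.smul_mem _ _ hug)
          exact hdisj hne (n • v) h2 (Submodule.smul_mem _ _ hvg)
        rw [hpz, zero_add, hmn, hnv, add_zero]
        exact Submodule.smul_mem _ _ (Submodule.mem_span_singleton_self u)
      · rw [Submodule.span_singleton_le_iff_mem]
        exact hug
    have hcg' : comp g₁⁻¹ = Submodule.span F {v} := by
      apply le_antisymm
      · intro a ha
        rw [hcompat g₁⁻¹] at ha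
        obtain ⟨p', hp', q', hq', rfl⟩ := Submodule.mem_sup.mp ha
        have hpz : p' = 0 := by
          by_contra hnep
          exact hg₂ne1 (heven_comp g₁⁻¹ p' hp'.1 hp'.2 hnep)
        obtain ⟨m, n, hmn⟩ := hspan q' (mem_oddSub.mp hq'.2)
        have hmu : m • u = 0 := by
          have h2 : m • u ∈ comp g₁⁻¹ := by
            have heq : q' - n • v = m • u := by rw [hmn]; abel
            rw [← heq]
            exact Submodule.sub_mem _ hq'.1 (Submodule.smul_mem _ _ hvg)
          exact hdisj hne (m • u) (Submodule.smul_mem _ _ hug) h2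
        rw [hpz, zero_add, hmn, hmu, zero_add]
        exact Submodule.smul_mem _ _ (Submodule.mem_span_singleton_self v)
      · rw [Submodule.span_singleton_le_iff_mem]
        exact hvg
    have hrest : ∀ g : G, g ≠ 1 → g ≠ g₁ → g ≠ g₁⁻¹ → comp g = ⊥ := by
      intro g hne1 hneg₁ hneg₂
      rw [Submodule.eq_bot_iff]
      intro a ha
      rw [hcompat g] at ha
      obtain ⟨p', hp', q', hq', rfl⟩ := Submodule.mem_sup.mp ha
      have hpz : p' = 0 := by
        by_contra hnep
        exact hne1 (heven_comp g p' hp'.1 hp'.2 hnep)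
      have hqz : q' = 0 := by
        by_contra hneq
        have hwz := hwedge g g₁ q' u hneg₁ hq'.1 hug (mem_oddSub.mp hq'.2) hu0 hneq hune
        have hm := hoddmul g g₁ q' u hq'.1 hug (mem_oddSub.mp hq'.2) hu0 hwz
        exact hneg₂ (eq_inv_of_mul_eq_one_left hm)
      rw [hpz, hqz, add_zero]
    -- the automorphism
    set Φ : (Fin 3 → F) ≃ₗ[F] (Fin 3 → F) :=
      LinearEquiv.ofLinear (kLin (v 2) (-v 1) (-(u 2)) (u 1)) (kLin (u 1) (v 1) (u 2) (v 2))
        (LinearMap.ext (kLin_comp1 hd1)) (LinearMap.ext (kLin_comp2 hd1)) with hΦdef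
    have hΦapp : ∀ a : Fin 3 → F, Φ a = kLin (v 2) (-v 1) (-(u 2)) (u 1) a := fun a => rfl
    have hΦlin : (Φ : (Fin 3 → F) →ₗ[F] (Fin 3 → F)) = kLin (v 2) (-v 1) (-(u 2)) (u 1) := rfl
    have hΦe : Φ eK = eK := by
      rw [hΦapp]
      funext i
      fin_cases i <;> simp [kLin_apply, eK]
    have hΦu : Φ u = xK := by
      rw [hΦapp]
      funext i
      fin_cases i
      · simp [kLin_apply, xK, hu0]
      · simp [kLin_apply, xK]; linear_combination hd1
      · simp [kLin_apply, xK]; ring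
    have hΦv : Φ v = yK := by
      rw [hΦapp]
      funext i
      fin_cases i
      · simp [kLin_apply, yK, hv0]
      · simp [kLin_apply, yK]; ring
      · simp [kLin_apply, yK]; linear_combination hd1
    have hΦ0 : ∀ a : Fin 3 → F, (Φ a) 0 = a 0 := fun a => rfl
    have hΦsymm0 : ∀ a : Fin 3 → F, (Φ.symm a) 0 = a 0 := fun a => rfl
    have hEvenmap : (kEvenSub F).map (Φ : (Fin 3 → F) →ₗ[F] (Fin 3 → F)) = kEvenSub F := by
      rw [kEvenSub, Submodule.map_span, Set.image_singleton]
      show Submodule.span F {Φ eK} = _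
      rw [hΦe]
    have hOddmap : (kOddSub F).map (Φ : (Fin 3 → F) →ₗ[F] (Fin 3 → F)) = kOddSub F := by
      apply le_antisymm
      · rintro a ⟨b, hb, rfl⟩
        exact mem_oddSub.mpr ((hΦ0 b).trans (mem_oddSub.mp hb))
      · intro a ha
        refine ⟨Φ.symm a, ?_, Φ.apply_symm_apply a⟩
        exact mem_oddSub.mpr ((hΦsymm0 a).trans (mem_oddSub.mp ha))
    have hΦspanu : (Submodule.span F {u}).map (Φ : (Fin 3 → F) →ₗ[F] (Fin 3 → F)) =
        Submodule.span F {xK} := by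
      rw [Submodule.map_span, Set.image_singleton]
      show Submodule.span F {Φ u} = _
      rw [hΦu]
    have hΦspanv : (Submodule.span F {v}).map (Φ : (Fin 3 → F) →ₗ[F] (Fin 3 → F)) =
        Submodule.span F {yK} := by
      rw [Submodule.map_span, Set.image_singleton]
      show Submodule.span F {Φ v} = _
      rw [hΦv]
    have hΦeven : (kEvenSub F).map (Φ : (Fin 3 → F) →ₗ[F] (Fin 3 → F)) =
        Submodule.span F {eK} := hEvenmap
    refine ⟨Φ, fun a b => kLin_mul hd1 a b, hEvenmap, hOddmap, Or.inr ?_⟩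
    ext S
    simp only [Set.mem_setOf_eq, Set.mem_insert_iff, Set.mem_singleton_iff]
    constructor
    · rintro ⟨g, hgne, rfl⟩
      by_cases hg1 : g = 1
      · right; left; rw [hg1, hc1]; exact hΦeven
      by_cases hgg : g = g₁
      · left; rw [hgg, hcg]; exact hΦspanu
      by_cases hgg' : g = g₁⁻¹
      · right; right; rw [hgg', hcg']; exact hΦspanv
      · exact absurd (hrest g hg1 hgg hgg') hgne
    · have huspanne : Submodule.span F {u} ≠ ⊥ := by
        rw [Ne, Submodule.span_singleton_eq_bot]; exact hune
      have hvspanne : Submodule.span F {v} ≠ ⊥ := by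
        rw [Ne, Submodule.span_singleton_eq_bot]; exact hvne
      rintro (rfl | rfl | rfl)
      · exact ⟨g₁, hcg ▸ huspanne, by rw [hcg, hΦspanu]⟩
      · exact ⟨1, hc1 ▸ hEne, by rw [hc1, hΦeven]⟩
      · exact ⟨g₁⁻¹, hcg' ▸ hvspanne, by rw [hcg', hΦspanv]⟩
end

section
/- For any pair of automorphisms (f, g) of the Kaplansky superalgebra K, the linear map on K₁₀ = F·1 ⊕ (K ⊗ K) fixing 1 and sending a⊗b to f(a)⊗g(b) is a superalgebra automorphism of K₁₀; this defines an injective group homomorphism Aut(K) × Aut(K) → Aut(K₁₀). -/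
open Matrix BigOperators

variable {F : Type*} [Field F]

/-- The Kac superalgebra K₁₀ = F·1 ⊕ (K ⊗ K), in the basis
(1, e⊗e, x⊗x, x⊗y, y⊗x, y⊗y, e⊗x, x⊗e, e⊗y, y⊗e) (indices 0,…,9), with product
determined by (a⊗b)(c⊗d) = (-1)^{|b||c|}(ac ⊗ bd - (3/4)(a|c)(b|d)·1), where
(e|e) = 1/2, (x|y) = 1 = -(y|x). -/
def k10Mul (a b : Fin 10 → F) : Fin 10 → F :=
  ![(1 : F) * a 0 * b 0 + ((-3 : F)/16) * a 1 * b 1 + ((3 : F)/4) * a 2 * b 5 + ((-3 : F)/4) * a 3 * b 4 + ((-3 : F)/4) * a 4 * b 3 + ((3 : F)/4) * a 5 * b 2 + ((-3 : F)/8) * a 6 * b 8 + ((-3 : F)/8) * a 7 * b 9 + ((3 : F)/8) * a 8 * b 6 + ((3 : F)/8) * a 9 * b 7,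
    (1 : F) * a 0 * b 1 + (1 : F) * a 1 * b 0 + (1 : F) * a 1 * b 1 + (-1 : F) * a 2 * b 5 + (1 : F) * a 3 * b 4 + (1 : F) * a 4 * b 3 + (-1 : F) * a 5 * b 2 + (1 : F) * a 6 * b 8 + (1 : F) * a 7 * b 9 + (-1 : F) * a 8 * b 6 + (-1 : F) * a 9 * b 7,
    (1 : F) * a 0 * b 2 + ((1 : F)/4) * a 1 * b 2 + (1 : F) * a 2 * b 0 + ((1 : F)/4) * a 2 * b 1 + ((-1 : F)/4) * a 6 * b 7 + ((1 : F)/4) * a 7 * b 6,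
    (1 : F) * a 0 * b 3 + ((1 : F)/4) * a 1 * b 3 + (1 : F) * a 3 * b 0 + ((1 : F)/4) * a 3 * b 1 + ((1 : F)/4) * a 7 * b 8 + ((-1 : F)/4) * a 8 * b 7,
    (1 : F) * a 0 * b 4 + ((1 : F)/4) * a 1 * b 4 + (1 : F) * a 4 * b 0 + ((1 : F)/4) * a 4 * b 1 + ((-1 : F)/4) * a 6 * b 9 + ((1 : F)/4) * a 9 * b 6,
    (1 : F) * a 0 * b 5 + ((1 : F)/4) * a 1 * b 5 + (1 : F) * a 5 * b 0 + ((1 : F)/4) * a 5 * b 1 + ((-1 : F)/4) * a 8 * b 9 + ((1 : F)/4) * a 9 * b 8,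
    (1 : F) * a 0 * b 6 + ((1 : F)/2) * a 1 * b 6 + ((-1 : F)/2) * a 2 * b 9 + ((1 : F)/2) * a 4 * b 7 + (1 : F) * a 6 * b 0 + ((1 : F)/2) * a 6 * b 1 + ((1 : F)/2) * a 7 * b 4 + ((-1 : F)/2) * a 9 * b 2,
    (1 : F) * a 0 * b 7 + ((1 : F)/2) * a 1 * b 7 + ((1 : F)/2) * a 2 * b 8 + ((-1 : F)/2) * a 3 * b 6 + ((-1 : F)/2) * a 6 * b 3 + (1 : F) * a 7 * b 0 + ((1 : F)/2) * a 7 * b 1 + ((1 : F)/2) * a 8 * b 2,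
    (1 : F) * a 0 * b 8 + ((1 : F)/2) * a 1 * b 8 + ((-1 : F)/2) * a 3 * b 9 + ((1 : F)/2) * a 5 * b 7 + ((1 : F)/2) * a 7 * b 5 + (1 : F) * a 8 * b 0 + ((1 : F)/2) * a 8 * b 1 + ((-1 : F)/2) * a 9 * b 3,
    (1 : F) * a 0 * b 9 + ((1 : F)/2) * a 1 * b 9 + ((1 : F)/2) * a 4 * b 8 + ((-1 : F)/2) * a 5 * b 6 + ((-1 : F)/2) * a 6 * b 5 + ((1 : F)/2) * a 8 * b 4 + (1 : F) * a 9 * b 0 + ((1 : F)/2) * a 9 * b 1]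

/-- The even part of K₁₀: span of 1, e⊗e, x⊗x, x⊗y, y⊗x, y⊗y. -/
def k10Even : Set (Fin 10 → F) := {u | u 6 = 0 ∧ u 7 = 0 ∧ u 8 = 0 ∧ u 9 = 0}

/-- The odd part of K₁₀: span of e⊗x, x⊗e, e⊗y, y⊗e. -/
def k10Odd : Set (Fin 10 → F) :=
  {u | u 0 = 0 ∧ u 1 = 0 ∧ u 2 = 0 ∧ u 3 = 0 ∧ u 4 = 0 ∧ u 5 = 0}

/-- The index of the basis tensor (basis i) ⊗ (basis j) of K ⊗ K inside the basis of K₁₀. -/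
def pairIdx : Fin 3 → Fin 3 → Fin 10 := fun i j => ![![1, 6, 8], ![7, 2, 3], ![9, 4, 5]] i j

/-- First tensor factor of the m-th basis element of K₁₀ (m ≠ 0). -/
def fstIdx : Fin 10 → Fin 3 := ![0, 0, 1, 1, 2, 2, 0, 1, 0, 2]

/-- Second tensor factor of the m-th basis element of K₁₀ (m ≠ 0). -/
def sndIdx : Fin 10 → Fin 3 := ![0, 0, 1, 2, 1, 2, 1, 0, 2, 0]

/-- The coordinates in K₁₀ of the tensor v ⊗ w of two elements of K. -/
def tensorVec (v w : Fin 3 → F) : Fin 10 → F :=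
  fun m => if m = 0 then 0 else v (fstIdx m) * w (sndIdx m)

/-- The endomorphism of K₁₀ fixing 1 and acting as f ⊗ g on K ⊗ K. -/
def Phi (f g : (Fin 3 → F) → (Fin 3 → F)) (u : Fin 10 → F) : Fin 10 → F :=
  fun m => (if m = 0 then u 0 else 0) +
    ∑ i : Fin 3, ∑ j : Fin 3,
      u (pairIdx i j) * tensorVec (f (Pi.single i 1)) (g (Pi.single j 1)) m

/-- A superalgebra automorphism of the Kaplansky superalgebra K. -/
def IsKAut (φ : (Fin 3 → F) ≃ₗ[F] (Fin 3 → F)) : Prop :=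
  (∀ a b, φ (kMul a b) = kMul (φ a) (φ b)) ∧
  (∀ a ∈ kEven, φ a ∈ kEven) ∧ (∀ a ∈ kOdd, φ a ∈ kOdd)

/-- The exchange automorphism δ of K₁₀: it fixes 1 and sends a⊗b to (-1)^{|a||b|} b⊗a. -/
def deltaMap (u : Fin 10 → F) : Fin 10 → F :=
  ![u 0, u 1, -u 2, -u 4, -u 3, -u 5, u 7, u 6, u 9, u 8]

/-- The torus automorphism t_λ of K: e ↦ e, x ↦ λx, y ↦ λ⁻¹y. -/
def tK (l : Fˣ) (a : Fin 3 → F) : Fin 3 → F :=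
  ![a 0, (l : F) * a 1, ((l⁻¹ : Fˣ) : F) * a 2]


section Aux
variable {F : Type*} [Field F]

def fMk (p q r s : F) (a : Fin 3 → F) : Fin 3 → F :=
  ![a 0, p * a 1 + r * a 2, q * a 1 + s * a 2]

def phiE (p q r s p' q' r' s' : F) (u : Fin 10 → F) : Fin 10 → F :=
  ![u 0,
    u 1,
    p * p' * u 2 + p * r' * u 3 + r * p' * u 4 + r * r' * u 5,
    p * q' * u 2 + p * s' * u 3 + r * q' * u 4 + r * s' * u 5,
    q * p' * u 2 + q * r' * u 3 + s * p' * u 4 + s * r' * u 5,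
    q * q' * u 2 + q * s' * u 3 + s * q' * u 4 + s * s' * u 5,
    p' * u 6 + r' * u 8,
    p * u 7 + r * u 9,
    q' * u 6 + s' * u 8,
    q * u 7 + s * u 9]

lemma phiE_app0 (p q r s p' q' r' s' : F) (u : Fin 10 → F) :
    phiE p q r s p' q' r' s' u 0 = u 0 := rfl
lemma phiE_app1 (p q r s p' q' r' s' : F) (u : Fin 10 → F) :
    phiE p q r s p' q' r' s' u 1 = u 1 := rfl
lemma phiE_app2 (p q r s p' q' r' s' : F) (u : Fin 10 → F) :
    phiE p q r s p' q' r' s' u 2 = p * p' * u 2 + p * r' * u 3 + r * p' * u 4 + r * r' * u 5 := rfl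
lemma phiE_app3 (p q r s p' q' r' s' : F) (u : Fin 10 → F) :
    phiE p q r s p' q' r' s' u 3 = p * q' * u 2 + p * s' * u 3 + r * q' * u 4 + r * s' * u 5 := rfl
lemma phiE_app4 (p q r s p' q' r' s' : F) (u : Fin 10 → F) :
    phiE p q r s p' q' r' s' u 4 = q * p' * u 2 + q * r' * u 3 + s * p' * u 4 + s * r' * u 5 := rfl
lemma phiE_app5 (p q r s p' q' r' s' : F) (u : Fin 10 → F) :
    phiE p q r s p' q' r' s' u 5 = q * q' * u 2 + q * s' * u 3 + s * q' * u 4 + s * s' * u 5 := rfl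
lemma phiE_app6 (p q r s p' q' r' s' : F) (u : Fin 10 → F) :
    phiE p q r s p' q' r' s' u 6 = p' * u 6 + r' * u 8 := rfl
lemma phiE_app7 (p q r s p' q' r' s' : F) (u : Fin 10 → F) :
    phiE p q r s p' q' r' s' u 7 = p * u 7 + r * u 9 := rfl
lemma phiE_app8 (p q r s p' q' r' s' : F) (u : Fin 10 → F) :
    phiE p q r s p' q' r' s' u 8 = q' * u 6 + s' * u 8 := rfl
lemma phiE_app9 (p q r s p' q' r' s' : F) (u : Fin 10 → F) :
    phiE p q r s p' q' r' s' u 9 = q * u 7 + s * u 9 := rfl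
lemma k10Mul_app0 (a b : Fin 10 → F) : k10Mul a b 0 = (1 : F) * a 0 * b 0 + ((-3 : F)/16) * a 1 * b 1 + ((3 : F)/4) * a 2 * b 5 + ((-3 : F)/4) * a 3 * b 4 + ((-3 : F)/4) * a 4 * b 3 + ((3 : F)/4) * a 5 * b 2 + ((-3 : F)/8) * a 6 * b 8 + ((-3 : F)/8) * a 7 * b 9 + ((3 : F)/8) * a 8 * b 6 + ((3 : F)/8) * a 9 * b 7 := rfl
lemma k10Mul_app1 (a b : Fin 10 → F) : k10Mul a b 1 = (1 : F) * a 0 * b 1 + (1 : F) * a 1 * b 0 + (1 : F) * a 1 * b 1 + (-1 : F) * a 2 * b 5 + (1 : F) * a 3 * b 4 + (1 : F) * a 4 * b 3 + (-1 : F) * a 5 * b 2 + (1 : F) * a 6 * b 8 + (1 : F) * a 7 * b 9 + (-1 : F) * a 8 * b 6 + (-1 : F) * a 9 * b 7 := rfl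
lemma k10Mul_app2 (a b : Fin 10 → F) : k10Mul a b 2 = (1 : F) * a 0 * b 2 + ((1 : F)/4) * a 1 * b 2 + (1 : F) * a 2 * b 0 + ((1 : F)/4) * a 2 * b 1 + ((-1 : F)/4) * a 6 * b 7 + ((1 : F)/4) * a 7 * b 6 := rfl
lemma k10Mul_app3 (a b : Fin 10 → F) : k10Mul a b 3 = (1 : F) * a 0 * b 3 + ((1 : F)/4) * a 1 * b 3 + (1 : F) * a 3 * b 0 + ((1 : F)/4) * a 3 * b 1 + ((1 : F)/4) * a 7 * b 8 + ((-1 : F)/4) * a 8 * b 7 := rfl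
lemma k10Mul_app4 (a b : Fin 10 → F) : k10Mul a b 4 = (1 : F) * a 0 * b 4 + ((1 : F)/4) * a 1 * b 4 + (1 : F) * a 4 * b 0 + ((1 : F)/4) * a 4 * b 1 + ((-1 : F)/4) * a 6 * b 9 + ((1 : F)/4) * a 9 * b 6 := rfl
lemma k10Mul_app5 (a b : Fin 10 → F) : k10Mul a b 5 = (1 : F) * a 0 * b 5 + ((1 : F)/4) * a 1 * b 5 + (1 : F) * a 5 * b 0 + ((1 : F)/4) * a 5 * b 1 + ((-1 : F)/4) * a 8 * b 9 + ((1 : F)/4) * a 9 * b 8 := rfl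
lemma k10Mul_app6 (a b : Fin 10 → F) : k10Mul a b 6 = (1 : F) * a 0 * b 6 + ((1 : F)/2) * a 1 * b 6 + ((-1 : F)/2) * a 2 * b 9 + ((1 : F)/2) * a 4 * b 7 + (1 : F) * a 6 * b 0 + ((1 : F)/2) * a 6 * b 1 + ((1 : F)/2) * a 7 * b 4 + ((-1 : F)/2) * a 9 * b 2 := rfl
lemma k10Mul_app7 (a b : Fin 10 → F) : k10Mul a b 7 = (1 : F) * a 0 * b 7 + ((1 : F)/2) * a 1 * b 7 + ((1 : F)/2) * a 2 * b 8 + ((-1 : F)/2) * a 3 * b 6 + ((-1 : F)/2) * a 6 * b 3 + (1 : F) * a 7 * b 0 + ((1 : F)/2) * a 7 * b 1 + ((1 : F)/2) * a 8 * b 2 := rfl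
lemma k10Mul_app8 (a b : Fin 10 → F) : k10Mul a b 8 = (1 : F) * a 0 * b 8 + ((1 : F)/2) * a 1 * b 8 + ((-1 : F)/2) * a 3 * b 9 + ((1 : F)/2) * a 5 * b 7 + ((1 : F)/2) * a 7 * b 5 + (1 : F) * a 8 * b 0 + ((1 : F)/2) * a 8 * b 1 + ((-1 : F)/2) * a 9 * b 3 := rfl
lemma k10Mul_app9 (a b : Fin 10 → F) : k10Mul a b 9 = (1 : F) * a 0 * b 9 + ((1 : F)/2) * a 1 * b 9 + ((1 : F)/2) * a 4 * b 8 + ((-1 : F)/2) * a 5 * b 6 + ((-1 : F)/2) * a 6 * b 5 + ((1 : F)/2) * a 8 * b 4 + (1 : F) * a 9 * b 0 + ((1 : F)/2) * a 9 * b 1 := rfl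

lemma vec3_0 (a b c : F) : (![a, b, c]) 0 = a := rfl
lemma vec3_1 (a b c : F) : (![a, b, c]) 1 = b := rfl
lemma vec3_2 (a b c : F) : (![a, b, c]) 2 = c := rfl

lemma kMul_app0 (a b : Fin 3 → F) : kMul a b 0 = a 0 * b 0 + a 1 * b 2 - a 2 * b 1 := rfl
lemma kMul_app1 (a b : Fin 3 → F) : kMul a b 1 = (a 0 * b 1 + a 1 * b 0) / 2 := rfl
lemma kMul_app2 (a b : Fin 3 → F) : kMul a b 2 = (a 0 * b 2 + a 2 * b 0) / 2 := rfl

lemma tensorVec_app0 (v w : Fin 3 → F) : tensorVec v w 0 = 0 := rfl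
lemma tensorVec_app1 (v w : Fin 3 → F) : tensorVec v w 1 = v 0 * w 0 := rfl
lemma tensorVec_app2 (v w : Fin 3 → F) : tensorVec v w 2 = v 1 * w 1 := rfl
lemma tensorVec_app3 (v w : Fin 3 → F) : tensorVec v w 3 = v 1 * w 2 := rfl
lemma tensorVec_app4 (v w : Fin 3 → F) : tensorVec v w 4 = v 2 * w 1 := rfl
lemma tensorVec_app5 (v w : Fin 3 → F) : tensorVec v w 5 = v 2 * w 2 := rfl
lemma tensorVec_app6 (v w : Fin 3 → F) : tensorVec v w 6 = v 0 * w 1 := rfl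
lemma tensorVec_app7 (v w : Fin 3 → F) : tensorVec v w 7 = v 1 * w 0 := rfl
lemma tensorVec_app8 (v w : Fin 3 → F) : tensorVec v w 8 = v 0 * w 2 := rfl
lemma tensorVec_app9 (v w : Fin 3 → F) : tensorVec v w 9 = v 2 * w 0 := rfl
lemma pairIdx_00 : (pairIdx 0 0 : Fin 10) = 1 := rfl
lemma pairIdx_01 : (pairIdx 0 1 : Fin 10) = 6 := rfl
lemma pairIdx_02 : (pairIdx 0 2 : Fin 10) = 8 := rfl
lemma pairIdx_10 : (pairIdx 1 0 : Fin 10) = 7 := rfl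
lemma pairIdx_11 : (pairIdx 1 1 : Fin 10) = 2 := rfl
lemma pairIdx_12 : (pairIdx 1 2 : Fin 10) = 3 := rfl
lemma pairIdx_20 : (pairIdx 2 0 : Fin 10) = 9 := rfl
lemma pairIdx_21 : (pairIdx 2 1 : Fin 10) = 4 := rfl
lemma pairIdx_22 : (pairIdx 2 2 : Fin 10) = 5 := rfl

lemma fMk_single0 (p q r s : F) : fMk p q r s (Pi.single 0 1) = ![1, 0, 0] := by
  funext i; fin_cases i
  · rfl
  · show p * 0 + r * 0 = 0; ring
  · show q * 0 + s * 0 = 0; ring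

lemma fMk_single1 (p q r s : F) : fMk p q r s (Pi.single 1 1) = ![0, p, q] := by
  funext i; fin_cases i
  · rfl
  · show p * 1 + r * 0 = p; ring
  · show q * 1 + s * 0 = q; ring

lemma fMk_single2 (p q r s : F) : fMk p q r s (Pi.single 2 1) = ![0, r, s] := by
  funext i; fin_cases i
  · rfl
  · show p * 0 + r * 1 = r; ring
  · show q * 0 + s * 1 = s; ring

lemma Phi_fMk (p q r s p' q' r' s' : F) (u : Fin 10 → F) :
    Phi (fMk p q r s) (fMk p' q' r' s') u = phiE p q r s p' q' r' s' u := by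
  have c0 : Phi (fMk p q r s) (fMk p' q' r' s') u 0 = phiE p q r s p' q' r' s' u 0 := by
    simp only [Phi, Fin.sum_univ_three, pairIdx_00, pairIdx_01, pairIdx_02, pairIdx_10, pairIdx_11, pairIdx_12, pairIdx_20, pairIdx_21, pairIdx_22,
      fMk_single0, fMk_single1, fMk_single2, tensorVec_app0, vec3_0, vec3_1, vec3_2, phiE_app0,
      if_true, if_false]
    all_goals ring
  have c1 : Phi (fMk p q r s) (fMk p' q' r' s') u 1 = phiE p q r s p' q' r' s' u 1 := by
    simp only [Phi, Fin.sum_univ_three, pairIdx_00, pairIdx_01, pairIdx_02, pairIdx_10, pairIdx_11, pairIdx_12, pairIdx_20, pairIdx_21, pairIdx_22,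
      fMk_single0, fMk_single1, fMk_single2, tensorVec_app1, vec3_0, vec3_1, vec3_2, phiE_app1,
      if_true, if_false]
    rw [if_neg (by decide)]
    all_goals ring
  have c2 : Phi (fMk p q r s) (fMk p' q' r' s') u 2 = phiE p q r s p' q' r' s' u 2 := by
    simp only [Phi, Fin.sum_univ_three, pairIdx_00, pairIdx_01, pairIdx_02, pairIdx_10, pairIdx_11, pairIdx_12, pairIdx_20, pairIdx_21, pairIdx_22,
      fMk_single0, fMk_single1, fMk_single2, tensorVec_app2, vec3_0, vec3_1, vec3_2, phiE_app2,
      if_true, if_false]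
    rw [if_neg (by decide)]
    all_goals ring
  have c3 : Phi (fMk p q r s) (fMk p' q' r' s') u 3 = phiE p q r s p' q' r' s' u 3 := by
    simp only [Phi, Fin.sum_univ_three, pairIdx_00, pairIdx_01, pairIdx_02, pairIdx_10, pairIdx_11, pairIdx_12, pairIdx_20, pairIdx_21, pairIdx_22,
      fMk_single0, fMk_single1, fMk_single2, tensorVec_app3, vec3_0, vec3_1, vec3_2, phiE_app3,
      if_true, if_false]
    rw [if_neg (by decide)]
    all_goals ring
  have c4 : Phi (fMk p q r s) (fMk p' q' r' s') u 4 = phiE p q r s p' q' r' s' u 4 := by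
    simp only [Phi, Fin.sum_univ_three, pairIdx_00, pairIdx_01, pairIdx_02, pairIdx_10, pairIdx_11, pairIdx_12, pairIdx_20, pairIdx_21, pairIdx_22,
      fMk_single0, fMk_single1, fMk_single2, tensorVec_app4, vec3_0, vec3_1, vec3_2, phiE_app4,
      if_true, if_false]
    rw [if_neg (by decide)]
    all_goals ring
  have c5 : Phi (fMk p q r s) (fMk p' q' r' s') u 5 = phiE p q r s p' q' r' s' u 5 := by
    simp only [Phi, Fin.sum_univ_three, pairIdx_00, pairIdx_01, pairIdx_02, pairIdx_10, pairIdx_11, pairIdx_12, pairIdx_20, pairIdx_21, pairIdx_22,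
      fMk_single0, fMk_single1, fMk_single2, tensorVec_app5, vec3_0, vec3_1, vec3_2, phiE_app5,
      if_true, if_false]
    rw [if_neg (by decide)]
    all_goals ring
  have c6 : Phi (fMk p q r s) (fMk p' q' r' s') u 6 = phiE p q r s p' q' r' s' u 6 := by
    simp only [Phi, Fin.sum_univ_three, pairIdx_00, pairIdx_01, pairIdx_02, pairIdx_10, pairIdx_11, pairIdx_12, pairIdx_20, pairIdx_21, pairIdx_22,
      fMk_single0, fMk_single1, fMk_single2, tensorVec_app6, vec3_0, vec3_1, vec3_2, phiE_app6,
      if_true, if_false]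
    rw [if_neg (by decide)]
    all_goals ring
  have c7 : Phi (fMk p q r s) (fMk p' q' r' s') u 7 = phiE p q r s p' q' r' s' u 7 := by
    simp only [Phi, Fin.sum_univ_three, pairIdx_00, pairIdx_01, pairIdx_02, pairIdx_10, pairIdx_11, pairIdx_12, pairIdx_20, pairIdx_21, pairIdx_22,
      fMk_single0, fMk_single1, fMk_single2, tensorVec_app7, vec3_0, vec3_1, vec3_2, phiE_app7,
      if_true, if_false]
    rw [if_neg (by decide)]
    all_goals ring
  have c8 : Phi (fMk p q r s) (fMk p' q' r' s') u 8 = phiE p q r s p' q' r' s' u 8 := by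
    simp only [Phi, Fin.sum_univ_three, pairIdx_00, pairIdx_01, pairIdx_02, pairIdx_10, pairIdx_11, pairIdx_12, pairIdx_20, pairIdx_21, pairIdx_22,
      fMk_single0, fMk_single1, fMk_single2, tensorVec_app8, vec3_0, vec3_1, vec3_2, phiE_app8,
      if_true, if_false]
    rw [if_neg (by decide)]
    all_goals ring
  have c9 : Phi (fMk p q r s) (fMk p' q' r' s') u 9 = phiE p q r s p' q' r' s' u 9 := by
    simp only [Phi, Fin.sum_univ_three, pairIdx_00, pairIdx_01, pairIdx_02, pairIdx_10, pairIdx_11, pairIdx_12, pairIdx_20, pairIdx_21, pairIdx_22,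
      fMk_single0, fMk_single1, fMk_single2, tensorVec_app9, vec3_0, vec3_1, vec3_2, phiE_app9,
      if_true, if_false]
    rw [if_neg (by decide)]
    all_goals ring
  funext m; fin_cases m
  exacts [c0, c1, c2, c3, c4, c5, c6, c7, c8, c9]

lemma phiE_mul (p q r s p' q' r' s' : F) (hd : p * s - q * r = 1) (hd' : p' * s' - q' * r' = 1)
    (u v : Fin 10 → F) :
    phiE p q r s p' q' r' s' (k10Mul u v) = k10Mul (phiE p q r s p' q' r' s' u) (phiE p q r s p' q' r' s' v) := by
  have c0 : phiE p q r s p' q' r' s' (k10Mul u v) 0 = k10Mul (phiE p q r s p' q' r' s' u) (phiE p q r s p' q' r' s' v) 0 := by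
    simp only [phiE_app0, phiE_app1, phiE_app2, phiE_app3, phiE_app4, phiE_app5, phiE_app6, phiE_app7, phiE_app8, phiE_app9, k10Mul_app0, k10Mul_app1, k10Mul_app2, k10Mul_app3, k10Mul_app4, k10Mul_app5, k10Mul_app6, k10Mul_app7, k10Mul_app8, k10Mul_app9]
    all_goals linear_combination (-(((3:F)/4)*p'*s'*u 2*v 5 + ((-3:F)/4)*p'*s'*u 3*v 4 + ((-3:F)/4)*p'*s'*u 4*v 3 + ((3:F)/4)*p'*s'*u 5*v 2 + ((-3:F)/4)*q'*r'*u 2*v 5 + ((3:F)/4)*q'*r'*u 3*v 4 + ((3:F)/4)*q'*r'*u 4*v 3 + ((-3:F)/4)*q'*r'*u 5*v 2 + ((-3:F)/8)*u 7*v 9 + ((3:F)/8)*u 9*v 7)) * hd + (-(((3:F)/4)*u 2*v 5 + ((-3:F)/4)*u 3*v 4 + ((-3:F)/4)*u 4*v 3 + ((3:F)/4)*u 5*v 2 + ((-3:F)/8)*u 6*v 8 + ((3:F)/8)*u 8*v 6)) * hd'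
  have c1 : phiE p q r s p' q' r' s' (k10Mul u v) 1 = k10Mul (phiE p q r s p' q' r' s' u) (phiE p q r s p' q' r' s' v) 1 := by
    simp only [phiE_app0, phiE_app1, phiE_app2, phiE_app3, phiE_app4, phiE_app5, phiE_app6, phiE_app7, phiE_app8, phiE_app9, k10Mul_app0, k10Mul_app1, k10Mul_app2, k10Mul_app3, k10Mul_app4, k10Mul_app5, k10Mul_app6, k10Mul_app7, k10Mul_app8, k10Mul_app9]
    all_goals linear_combination (-((-1:F)*p'*s'*u 2*v 5 + (1:F)*p'*s'*u 3*v 4 + (1:F)*p'*s'*u 4*v 3 + (-1:F)*p'*s'*u 5*v 2 + (1:F)*q'*r'*u 2*v 5 + (-1:F)*q'*r'*u 3*v 4 + (-1:F)*q'*r'*u 4*v 3 + (1:F)*q'*r'*u 5*v 2 + (1:F)*u 7*v 9 + (-1:F)*u 9*v 7)) * hd + (-((-1:F)*u 2*v 5 + (1:F)*u 3*v 4 + (1:F)*u 4*v 3 + (-1:F)*u 5*v 2 + (1:F)*u 6*v 8 + (-1:F)*u 8*v 6)) * hd'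
  have c2 : phiE p q r s p' q' r' s' (k10Mul u v) 2 = k10Mul (phiE p q r s p' q' r' s' u) (phiE p q r s p' q' r' s' v) 2 := by
    simp only [phiE_app0, phiE_app1, phiE_app2, phiE_app3, phiE_app4, phiE_app5, phiE_app6, phiE_app7, phiE_app8, phiE_app9, k10Mul_app0, k10Mul_app1, k10Mul_app2, k10Mul_app3, k10Mul_app4, k10Mul_app5, k10Mul_app6, k10Mul_app7, k10Mul_app8, k10Mul_app9]
    all_goals ring
  have c3 : phiE p q r s p' q' r' s' (k10Mul u v) 3 = k10Mul (phiE p q r s p' q' r' s' u) (phiE p q r s p' q' r' s' v) 3 := by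
    simp only [phiE_app0, phiE_app1, phiE_app2, phiE_app3, phiE_app4, phiE_app5, phiE_app6, phiE_app7, phiE_app8, phiE_app9, k10Mul_app0, k10Mul_app1, k10Mul_app2, k10Mul_app3, k10Mul_app4, k10Mul_app5, k10Mul_app6, k10Mul_app7, k10Mul_app8, k10Mul_app9]
    all_goals ring
  have c4 : phiE p q r s p' q' r' s' (k10Mul u v) 4 = k10Mul (phiE p q r s p' q' r' s' u) (phiE p q r s p' q' r' s' v) 4 := by
    simp only [phiE_app0, phiE_app1, phiE_app2, phiE_app3, phiE_app4, phiE_app5, phiE_app6, phiE_app7, phiE_app8, phiE_app9, k10Mul_app0, k10Mul_app1, k10Mul_app2, k10Mul_app3, k10Mul_app4, k10Mul_app5, k10Mul_app6, k10Mul_app7, k10Mul_app8, k10Mul_app9]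
    all_goals ring
  have c5 : phiE p q r s p' q' r' s' (k10Mul u v) 5 = k10Mul (phiE p q r s p' q' r' s' u) (phiE p q r s p' q' r' s' v) 5 := by
    simp only [phiE_app0, phiE_app1, phiE_app2, phiE_app3, phiE_app4, phiE_app5, phiE_app6, phiE_app7, phiE_app8, phiE_app9, k10Mul_app0, k10Mul_app1, k10Mul_app2, k10Mul_app3, k10Mul_app4, k10Mul_app5, k10Mul_app6, k10Mul_app7, k10Mul_app8, k10Mul_app9]
    all_goals ring
  have c6 : phiE p q r s p' q' r' s' (k10Mul u v) 6 = k10Mul (phiE p q r s p' q' r' s' u) (phiE p q r s p' q' r' s' v) 6 := by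
    simp only [phiE_app0, phiE_app1, phiE_app2, phiE_app3, phiE_app4, phiE_app5, phiE_app6, phiE_app7, phiE_app8, phiE_app9, k10Mul_app0, k10Mul_app1, k10Mul_app2, k10Mul_app3, k10Mul_app4, k10Mul_app5, k10Mul_app6, k10Mul_app7, k10Mul_app8, k10Mul_app9]
    all_goals linear_combination (-(((-1:F)/2)*p'*u 2*v 9 + ((1:F)/2)*p'*u 4*v 7 + ((1:F)/2)*p'*u 7*v 4 + ((-1:F)/2)*p'*u 9*v 2 + ((-1:F)/2)*r'*u 3*v 9 + ((1:F)/2)*r'*u 5*v 7 + ((1:F)/2)*r'*u 7*v 5 + ((-1:F)/2)*r'*u 9*v 3)) * hd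
  have c7 : phiE p q r s p' q' r' s' (k10Mul u v) 7 = k10Mul (phiE p q r s p' q' r' s' u) (phiE p q r s p' q' r' s' v) 7 := by
    simp only [phiE_app0, phiE_app1, phiE_app2, phiE_app3, phiE_app4, phiE_app5, phiE_app6, phiE_app7, phiE_app8, phiE_app9, k10Mul_app0, k10Mul_app1, k10Mul_app2, k10Mul_app3, k10Mul_app4, k10Mul_app5, k10Mul_app6, k10Mul_app7, k10Mul_app8, k10Mul_app9]
    all_goals linear_combination (-(((1:F)/2)*p*u 2*v 8 + ((-1:F)/2)*p*u 3*v 6 + ((-1:F)/2)*p*u 6*v 3 + ((1:F)/2)*p*u 8*v 2 + ((1:F)/2)*r*u 4*v 8 + ((-1:F)/2)*r*u 5*v 6 + ((-1:F)/2)*r*u 6*v 5 + ((1:F)/2)*r*u 8*v 4)) * hd'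
  have c8 : phiE p q r s p' q' r' s' (k10Mul u v) 8 = k10Mul (phiE p q r s p' q' r' s' u) (phiE p q r s p' q' r' s' v) 8 := by
    simp only [phiE_app0, phiE_app1, phiE_app2, phiE_app3, phiE_app4, phiE_app5, phiE_app6, phiE_app7, phiE_app8, phiE_app9, k10Mul_app0, k10Mul_app1, k10Mul_app2, k10Mul_app3, k10Mul_app4, k10Mul_app5, k10Mul_app6, k10Mul_app7, k10Mul_app8, k10Mul_app9]
    all_goals linear_combination (-(((-1:F)/2)*q'*u 2*v 9 + ((1:F)/2)*q'*u 4*v 7 + ((1:F)/2)*q'*u 7*v 4 + ((-1:F)/2)*q'*u 9*v 2 + ((-1:F)/2)*s'*u 3*v 9 + ((1:F)/2)*s'*u 5*v 7 + ((1:F)/2)*s'*u 7*v 5 + ((-1:F)/2)*s'*u 9*v 3)) * hd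
  have c9 : phiE p q r s p' q' r' s' (k10Mul u v) 9 = k10Mul (phiE p q r s p' q' r' s' u) (phiE p q r s p' q' r' s' v) 9 := by
    simp only [phiE_app0, phiE_app1, phiE_app2, phiE_app3, phiE_app4, phiE_app5, phiE_app6, phiE_app7, phiE_app8, phiE_app9, k10Mul_app0, k10Mul_app1, k10Mul_app2, k10Mul_app3, k10Mul_app4, k10Mul_app5, k10Mul_app6, k10Mul_app7, k10Mul_app8, k10Mul_app9]
    all_goals linear_combination (-(((1:F)/2)*q*u 2*v 8 + ((-1:F)/2)*q*u 3*v 6 + ((-1:F)/2)*q*u 6*v 3 + ((1:F)/2)*q*u 8*v 2 + ((1:F)/2)*s*u 4*v 8 + ((-1:F)/2)*s*u 5*v 6 + ((-1:F)/2)*s*u 6*v 5 + ((1:F)/2)*s*u 8*v 4)) * hd'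
  funext m; fin_cases m
  exacts [c0, c1, c2, c3, c4, c5, c6, c7, c8, c9]

lemma phiE_comp (p2 q2 r2 s2 p2' q2' r2' s2' p1 q1 r1 s1 p1' q1' r1' s1' : F) (u : Fin 10 → F) :
    phiE p2 q2 r2 s2 p2' q2' r2' s2' (phiE p1 q1 r1 s1 p1' q1' r1' s1' u) =
    phiE (p2 * p1 + r2 * q1) (q2 * p1 + s2 * q1) (p2 * r1 + r2 * s1) (q2 * r1 + s2 * s1)
      (p2' * p1' + r2' * q1') (q2' * p1' + s2' * q1') (p2' * r1' + r2' * s1') (q2' * r1' + s2' * s1') u := by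
  have c0 : phiE p2 q2 r2 s2 p2' q2' r2' s2' (phiE p1 q1 r1 s1 p1' q1' r1' s1' u) 0 =
      phiE (p2 * p1 + r2 * q1) (q2 * p1 + s2 * q1) (p2 * r1 + r2 * s1) (q2 * r1 + s2 * s1)
      (p2' * p1' + r2' * q1') (q2' * p1' + s2' * q1') (p2' * r1' + r2' * s1') (q2' * r1' + s2' * s1') u 0 := by
    simp only [phiE_app0, phiE_app1, phiE_app2, phiE_app3, phiE_app4, phiE_app5, phiE_app6, phiE_app7, phiE_app8, phiE_app9]
    all_goals ring
  have c1 : phiE p2 q2 r2 s2 p2' q2' r2' s2' (phiE p1 q1 r1 s1 p1' q1' r1' s1' u) 1 =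
      phiE (p2 * p1 + r2 * q1) (q2 * p1 + s2 * q1) (p2 * r1 + r2 * s1) (q2 * r1 + s2 * s1)
      (p2' * p1' + r2' * q1') (q2' * p1' + s2' * q1') (p2' * r1' + r2' * s1') (q2' * r1' + s2' * s1') u 1 := by
    simp only [phiE_app0, phiE_app1, phiE_app2, phiE_app3, phiE_app4, phiE_app5, phiE_app6, phiE_app7, phiE_app8, phiE_app9]
    all_goals ring
  have c2 : phiE p2 q2 r2 s2 p2' q2' r2' s2' (phiE p1 q1 r1 s1 p1' q1' r1' s1' u) 2 =
      phiE (p2 * p1 + r2 * q1) (q2 * p1 + s2 * q1) (p2 * r1 + r2 * s1) (q2 * r1 + s2 * s1)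
      (p2' * p1' + r2' * q1') (q2' * p1' + s2' * q1') (p2' * r1' + r2' * s1') (q2' * r1' + s2' * s1') u 2 := by
    simp only [phiE_app0, phiE_app1, phiE_app2, phiE_app3, phiE_app4, phiE_app5, phiE_app6, phiE_app7, phiE_app8, phiE_app9]
    all_goals ring
  have c3 : phiE p2 q2 r2 s2 p2' q2' r2' s2' (phiE p1 q1 r1 s1 p1' q1' r1' s1' u) 3 =
      phiE (p2 * p1 + r2 * q1) (q2 * p1 + s2 * q1) (p2 * r1 + r2 * s1) (q2 * r1 + s2 * s1)
      (p2' * p1' + r2' * q1') (q2' * p1' + s2' * q1') (p2' * r1' + r2' * s1') (q2' * r1' + s2' * s1') u 3 := by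
    simp only [phiE_app0, phiE_app1, phiE_app2, phiE_app3, phiE_app4, phiE_app5, phiE_app6, phiE_app7, phiE_app8, phiE_app9]
    all_goals ring
  have c4 : phiE p2 q2 r2 s2 p2' q2' r2' s2' (phiE p1 q1 r1 s1 p1' q1' r1' s1' u) 4 =
      phiE (p2 * p1 + r2 * q1) (q2 * p1 + s2 * q1) (p2 * r1 + r2 * s1) (q2 * r1 + s2 * s1)
      (p2' * p1' + r2' * q1') (q2' * p1' + s2' * q1') (p2' * r1' + r2' * s1') (q2' * r1' + s2' * s1') u 4 := by
    simp only [phiE_app0, phiE_app1, phiE_app2, phiE_app3, phiE_app4, phiE_app5, phiE_app6, phiE_app7, phiE_app8, phiE_app9]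
    all_goals ring
  have c5 : phiE p2 q2 r2 s2 p2' q2' r2' s2' (phiE p1 q1 r1 s1 p1' q1' r1' s1' u) 5 =
      phiE (p2 * p1 + r2 * q1) (q2 * p1 + s2 * q1) (p2 * r1 + r2 * s1) (q2 * r1 + s2 * s1)
      (p2' * p1' + r2' * q1') (q2' * p1' + s2' * q1') (p2' * r1' + r2' * s1') (q2' * r1' + s2' * s1') u 5 := by
    simp only [phiE_app0, phiE_app1, phiE_app2, phiE_app3, phiE_app4, phiE_app5, phiE_app6, phiE_app7, phiE_app8, phiE_app9]
    all_goals ring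
  have c6 : phiE p2 q2 r2 s2 p2' q2' r2' s2' (phiE p1 q1 r1 s1 p1' q1' r1' s1' u) 6 =
      phiE (p2 * p1 + r2 * q1) (q2 * p1 + s2 * q1) (p2 * r1 + r2 * s1) (q2 * r1 + s2 * s1)
      (p2' * p1' + r2' * q1') (q2' * p1' + s2' * q1') (p2' * r1' + r2' * s1') (q2' * r1' + s2' * s1') u 6 := by
    simp only [phiE_app0, phiE_app1, phiE_app2, phiE_app3, phiE_app4, phiE_app5, phiE_app6, phiE_app7, phiE_app8, phiE_app9]
    all_goals ring
  have c7 : phiE p2 q2 r2 s2 p2' q2' r2' s2' (phiE p1 q1 r1 s1 p1' q1' r1' s1' u) 7 =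
      phiE (p2 * p1 + r2 * q1) (q2 * p1 + s2 * q1) (p2 * r1 + r2 * s1) (q2 * r1 + s2 * s1)
      (p2' * p1' + r2' * q1') (q2' * p1' + s2' * q1') (p2' * r1' + r2' * s1') (q2' * r1' + s2' * s1') u 7 := by
    simp only [phiE_app0, phiE_app1, phiE_app2, phiE_app3, phiE_app4, phiE_app5, phiE_app6, phiE_app7, phiE_app8, phiE_app9]
    all_goals ring
  have c8 : phiE p2 q2 r2 s2 p2' q2' r2' s2' (phiE p1 q1 r1 s1 p1' q1' r1' s1' u) 8 =
      phiE (p2 * p1 + r2 * q1) (q2 * p1 + s2 * q1) (p2 * r1 + r2 * s1) (q2 * r1 + s2 * s1)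
      (p2' * p1' + r2' * q1') (q2' * p1' + s2' * q1') (p2' * r1' + r2' * s1') (q2' * r1' + s2' * s1') u 8 := by
    simp only [phiE_app0, phiE_app1, phiE_app2, phiE_app3, phiE_app4, phiE_app5, phiE_app6, phiE_app7, phiE_app8, phiE_app9]
    all_goals ring
  have c9 : phiE p2 q2 r2 s2 p2' q2' r2' s2' (phiE p1 q1 r1 s1 p1' q1' r1' s1' u) 9 =
      phiE (p2 * p1 + r2 * q1) (q2 * p1 + s2 * q1) (p2 * r1 + r2 * s1) (q2 * r1 + s2 * s1)
      (p2' * p1' + r2' * q1') (q2' * p1' + s2' * q1') (p2' * r1' + r2' * s1') (q2' * r1' + s2' * s1') u 9 := by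
    simp only [phiE_app0, phiE_app1, phiE_app2, phiE_app3, phiE_app4, phiE_app5, phiE_app6, phiE_app7, phiE_app8, phiE_app9]
    all_goals ring
  funext m; fin_cases m
  exacts [c0, c1, c2, c3, c4, c5, c6, c7, c8, c9]

lemma phiE_id (u : Fin 10 → F) : phiE 1 0 0 1 1 0 0 1 u = u := by
  have c0 : phiE (1:F) 0 0 1 1 0 0 1 u 0 = u 0 := by
    simp only [phiE_app0]
    all_goals ring
  have c1 : phiE (1:F) 0 0 1 1 0 0 1 u 1 = u 1 := by
    simp only [phiE_app1]
    all_goals ring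
  have c2 : phiE (1:F) 0 0 1 1 0 0 1 u 2 = u 2 := by
    simp only [phiE_app2]
    all_goals ring
  have c3 : phiE (1:F) 0 0 1 1 0 0 1 u 3 = u 3 := by
    simp only [phiE_app3]
    all_goals ring
  have c4 : phiE (1:F) 0 0 1 1 0 0 1 u 4 = u 4 := by
    simp only [phiE_app4]
    all_goals ring
  have c5 : phiE (1:F) 0 0 1 1 0 0 1 u 5 = u 5 := by
    simp only [phiE_app5]
    all_goals ring
  have c6 : phiE (1:F) 0 0 1 1 0 0 1 u 6 = u 6 := by
    simp only [phiE_app6]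
    all_goals ring
  have c7 : phiE (1:F) 0 0 1 1 0 0 1 u 7 = u 7 := by
    simp only [phiE_app7]
    all_goals ring
  have c8 : phiE (1:F) 0 0 1 1 0 0 1 u 8 = u 8 := by
    simp only [phiE_app8]
    all_goals ring
  have c9 : phiE (1:F) 0 0 1 1 0 0 1 u 9 = u 9 := by
    simp only [phiE_app9]
    all_goals ring
  funext m; fin_cases m
  exacts [c0, c1, c2, c3, c4, c5, c6, c7, c8, c9]

lemma fMk_comp (p2 q2 r2 s2 p1 q1 r1 s1 : F) (a : Fin 3 → F) :
    fMk p2 q2 r2 s2 (fMk p1 q1 r1 s1 a) =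
    fMk (p2 * p1 + r2 * q1) (q2 * p1 + s2 * q1) (p2 * r1 + r2 * s1) (q2 * r1 + s2 * s1) a := by
  funext i; fin_cases i
  · rfl
  · show p2 * (p1 * a 1 + r1 * a 2) + r2 * (q1 * a 1 + s1 * a 2) =
      (p2 * p1 + r2 * q1) * a 1 + (p2 * r1 + r2 * s1) * a 2
    ring
  · show q2 * (p1 * a 1 + r1 * a 2) + s2 * (q1 * a 1 + s1 * a 2) =
      (q2 * p1 + s2 * q1) * a 1 + (q2 * r1 + s2 * s1) * a 2
    ring

lemma exists_params (f : (Fin 3 → F) ≃ₗ[F] (Fin 3 → F)) (hf : IsKAut f) :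
    ∃ p q r s : F, p * s - q * r = 1 ∧ ∀ a, f a = fMk p q r s a := by
  obtain ⟨hmul, hev, hod⟩ := hf
  obtain ⟨he1, he2⟩ := hev eK ⟨rfl, rfl⟩
  have hee : kMul (eK : Fin 3 → F) eK = eK := by
    funext i; fin_cases i
    · show (1:F) * 1 + 0 * 0 - 0 * 0 = 1; ring
    · show ((1:F) * 0 + 0 * 1) / 2 = 0; ring
    · show ((1:F) * 0 + 0 * 1) / 2 = 0; ring
  have hc := hmul eK eK
  rw [hee] at hc
  have hc0 := congrFun hc 0
  rw [kMul_app0, he1, he2] at hc0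
  have hc1 : f eK 0 = 1 := by
    rcases mul_eq_zero.mp (show f eK 0 * (f eK 0 - 1) = 0 by linear_combination -hc0) with h | h
    · exfalso
      have hz : f eK = 0 := by
        funext i; fin_cases i
        exacts [h, he1, he2]
      have : (eK : Fin 3 → F) = 0 := f.injective (by rw [hz, map_zero])
      exact one_ne_zero (congrFun this 0)
    · linear_combination h
  have hfe : f eK = ![1, 0, 0] := by
    funext i; fin_cases i
    exacts [hc1, he1, he2]
  set p := f xK 1 with hp
  set q := f xK 2 with hq
  set r := f yK 1 with hr
  set s := f yK 2 with hs
  have hfx : f xK = ![0, p, q] := by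
    funext i; fin_cases i
    exacts [hod xK rfl, rfl, rfl]
  have hfy : f yK = ![0, r, s] := by
    funext i; fin_cases i
    exacts [hod yK rfl, rfl, rfl]
  have hxy : kMul (xK : Fin 3 → F) yK = eK := by
    funext i; fin_cases i
    · show (0:F) * 0 + 1 * 1 - 0 * 0 = 1; ring
    · show ((0:F) * 0 + 1 * 0) / 2 = 0; ring
    · show ((0:F) * 1 + 0 * 0) / 2 = 0; ring
  have hdet : p * s - q * r = 1 := by
    have h := hmul xK yK
    rw [hxy, hfe, hfx, hfy] at h
    have h0 := congrFun h 0
    rw [kMul_app0] at h0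
    simp only [vec3_0, vec3_1, vec3_2] at h0
    linear_combination -h0
  refine ⟨p, q, r, s, hdet, fun a => ?_⟩
  have hdec : a = a 0 • (eK : Fin 3 → F) + a 1 • xK + a 2 • yK := by
    funext i; fin_cases i
    · show a 0 = a 0 * 1 + a 1 * 0 + a 2 * 0; ring
    · show a 1 = a 0 * 0 + a 1 * 1 + a 2 * 0; ring
    · show a 2 = a 0 * 0 + a 1 * 0 + a 2 * 1; ring
  have h1 : f a = a 0 • f eK + a 1 • f xK + a 2 • f yK := by
    conv_lhs => rw [hdec]
    simp only [map_add, _root_.map_smul]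
  rw [hfe, hfx, hfy] at h1
  rw [h1]
  funext i; fin_cases i
  · show a 0 * 1 + a 1 * 0 + a 2 * 0 = a 0; ring
  · show a 0 * 0 + a 1 * p + a 2 * r = p * a 1 + r * a 2; ring
  · show a 0 * 0 + a 1 * q + a 2 * s = q * a 1 + s * a 2; ring

lemma phiE_single (p q r s p' q' r' s' : F) :
    phiE p q r s p' q' r' s' (Pi.single 0 1) = Pi.single 0 1 := by
  have c0 : phiE p q r s p' q' r' s' (Pi.single 0 1) 0 = (Pi.single (0 : Fin 10) (1:F) : Fin 10 → F) 0 := by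
    simp only [phiE_app0, Pi.single_apply, eq_self_iff_true, if_true, if_false,
      show ((1:Fin 10) = 0) = False from by decide, show ((2:Fin 10) = 0) = False from by decide, show ((3:Fin 10) = 0) = False from by decide, show ((4:Fin 10) = 0) = False from by decide, show ((5:Fin 10) = 0) = False from by decide, show ((6:Fin 10) = 0) = False from by decide, show ((7:Fin 10) = 0) = False from by decide, show ((8:Fin 10) = 0) = False from by decide, show ((9:Fin 10) = 0) = False from by decide]
    all_goals ring
  have c1 : phiE p q r s p' q' r' s' (Pi.single 0 1) 1 = (Pi.single (0 : Fin 10) (1:F) : Fin 10 → F) 1 := by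
    simp only [phiE_app1, Pi.single_apply, eq_self_iff_true, if_true, if_false,
      show ((1:Fin 10) = 0) = False from by decide, show ((2:Fin 10) = 0) = False from by decide, show ((3:Fin 10) = 0) = False from by decide, show ((4:Fin 10) = 0) = False from by decide, show ((5:Fin 10) = 0) = False from by decide, show ((6:Fin 10) = 0) = False from by decide, show ((7:Fin 10) = 0) = False from by decide, show ((8:Fin 10) = 0) = False from by decide, show ((9:Fin 10) = 0) = False from by decide]
    all_goals ring
  have c2 : phiE p q r s p' q' r' s' (Pi.single 0 1) 2 = (Pi.single (0 : Fin 10) (1:F) : Fin 10 → F) 2 := by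
    simp only [phiE_app2, Pi.single_apply, eq_self_iff_true, if_true, if_false,
      show ((1:Fin 10) = 0) = False from by decide, show ((2:Fin 10) = 0) = False from by decide, show ((3:Fin 10) = 0) = False from by decide, show ((4:Fin 10) = 0) = False from by decide, show ((5:Fin 10) = 0) = False from by decide, show ((6:Fin 10) = 0) = False from by decide, show ((7:Fin 10) = 0) = False from by decide, show ((8:Fin 10) = 0) = False from by decide, show ((9:Fin 10) = 0) = False from by decide]
    all_goals ring
  have c3 : phiE p q r s p' q' r' s' (Pi.single 0 1) 3 = (Pi.single (0 : Fin 10) (1:F) : Fin 10 → F) 3 := by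
    simp only [phiE_app3, Pi.single_apply, eq_self_iff_true, if_true, if_false,
      show ((1:Fin 10) = 0) = False from by decide, show ((2:Fin 10) = 0) = False from by decide, show ((3:Fin 10) = 0) = False from by decide, show ((4:Fin 10) = 0) = False from by decide, show ((5:Fin 10) = 0) = False from by decide, show ((6:Fin 10) = 0) = False from by decide, show ((7:Fin 10) = 0) = False from by decide, show ((8:Fin 10) = 0) = False from by decide, show ((9:Fin 10) = 0) = False from by decide]
    all_goals ring
  have c4 : phiE p q r s p' q' r' s' (Pi.single 0 1) 4 = (Pi.single (0 : Fin 10) (1:F) : Fin 10 → F) 4 := by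
    simp only [phiE_app4, Pi.single_apply, eq_self_iff_true, if_true, if_false,
      show ((1:Fin 10) = 0) = False from by decide, show ((2:Fin 10) = 0) = False from by decide, show ((3:Fin 10) = 0) = False from by decide, show ((4:Fin 10) = 0) = False from by decide, show ((5:Fin 10) = 0) = False from by decide, show ((6:Fin 10) = 0) = False from by decide, show ((7:Fin 10) = 0) = False from by decide, show ((8:Fin 10) = 0) = False from by decide, show ((9:Fin 10) = 0) = False from by decide]
    all_goals ring
  have c5 : phiE p q r s p' q' r' s' (Pi.single 0 1) 5 = (Pi.single (0 : Fin 10) (1:F) : Fin 10 → F) 5 := by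
    simp only [phiE_app5, Pi.single_apply, eq_self_iff_true, if_true, if_false,
      show ((1:Fin 10) = 0) = False from by decide, show ((2:Fin 10) = 0) = False from by decide, show ((3:Fin 10) = 0) = False from by decide, show ((4:Fin 10) = 0) = False from by decide, show ((5:Fin 10) = 0) = False from by decide, show ((6:Fin 10) = 0) = False from by decide, show ((7:Fin 10) = 0) = False from by decide, show ((8:Fin 10) = 0) = False from by decide, show ((9:Fin 10) = 0) = False from by decide]
    all_goals ring
  have c6 : phiE p q r s p' q' r' s' (Pi.single 0 1) 6 = (Pi.single (0 : Fin 10) (1:F) : Fin 10 → F) 6 := by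
    simp only [phiE_app6, Pi.single_apply, eq_self_iff_true, if_true, if_false,
      show ((1:Fin 10) = 0) = False from by decide, show ((2:Fin 10) = 0) = False from by decide, show ((3:Fin 10) = 0) = False from by decide, show ((4:Fin 10) = 0) = False from by decide, show ((5:Fin 10) = 0) = False from by decide, show ((6:Fin 10) = 0) = False from by decide, show ((7:Fin 10) = 0) = False from by decide, show ((8:Fin 10) = 0) = False from by decide, show ((9:Fin 10) = 0) = False from by decide]
    all_goals ring
  have c7 : phiE p q r s p' q' r' s' (Pi.single 0 1) 7 = (Pi.single (0 : Fin 10) (1:F) : Fin 10 → F) 7 := by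
    simp only [phiE_app7, Pi.single_apply, eq_self_iff_true, if_true, if_false,
      show ((1:Fin 10) = 0) = False from by decide, show ((2:Fin 10) = 0) = False from by decide, show ((3:Fin 10) = 0) = False from by decide, show ((4:Fin 10) = 0) = False from by decide, show ((5:Fin 10) = 0) = False from by decide, show ((6:Fin 10) = 0) = False from by decide, show ((7:Fin 10) = 0) = False from by decide, show ((8:Fin 10) = 0) = False from by decide, show ((9:Fin 10) = 0) = False from by decide]
    all_goals ring
  have c8 : phiE p q r s p' q' r' s' (Pi.single 0 1) 8 = (Pi.single (0 : Fin 10) (1:F) : Fin 10 → F) 8 := by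
    simp only [phiE_app8, Pi.single_apply, eq_self_iff_true, if_true, if_false,
      show ((1:Fin 10) = 0) = False from by decide, show ((2:Fin 10) = 0) = False from by decide, show ((3:Fin 10) = 0) = False from by decide, show ((4:Fin 10) = 0) = False from by decide, show ((5:Fin 10) = 0) = False from by decide, show ((6:Fin 10) = 0) = False from by decide, show ((7:Fin 10) = 0) = False from by decide, show ((8:Fin 10) = 0) = False from by decide, show ((9:Fin 10) = 0) = False from by decide]
    all_goals ring
  have c9 : phiE p q r s p' q' r' s' (Pi.single 0 1) 9 = (Pi.single (0 : Fin 10) (1:F) : Fin 10 → F) 9 := by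
    simp only [phiE_app9, Pi.single_apply, eq_self_iff_true, if_true, if_false,
      show ((1:Fin 10) = 0) = False from by decide, show ((2:Fin 10) = 0) = False from by decide, show ((3:Fin 10) = 0) = False from by decide, show ((4:Fin 10) = 0) = False from by decide, show ((5:Fin 10) = 0) = False from by decide, show ((6:Fin 10) = 0) = False from by decide, show ((7:Fin 10) = 0) = False from by decide, show ((8:Fin 10) = 0) = False from by decide, show ((9:Fin 10) = 0) = False from by decide]
    all_goals ring
  funext m; fin_cases m
  exacts [c0, c1, c2, c3, c4, c5, c6, c7, c8, c9]

end Aux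


/-- For automorphisms (f, g) of the Kaplansky superalgebra, the map Phi f g (fixing 1 and
sending a⊗b to f(a)⊗g(b)) is a superalgebra automorphism of K₁₀, and (f,g) ↦ Phi f g is an
injective group homomorphism Aut(K) × Aut(K) → Aut(K₁₀). -/
theorem phi_injective_group_hom {F : Type*} [Field F] [IsAlgClosed F] [CharZero F] :
    (∀ f g : (Fin 3 → F) ≃ₗ[F] (Fin 3 → F), IsKAut f → IsKAut g →
      ((∀ u v : Fin 10 → F, Phi ⇑f ⇑g (k10Mul u v) = k10Mul (Phi ⇑f ⇑g u) (Phi ⇑f ⇑g v)) ∧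
       Phi ⇑f ⇑g (Pi.single 0 1) = Pi.single 0 1 ∧
       Function.Bijective (Phi ⇑f ⇑g) ∧
       (∀ u ∈ k10Even, Phi ⇑f ⇑g u ∈ k10Even) ∧
       (∀ u ∈ k10Odd, Phi ⇑f ⇑g u ∈ k10Odd))) ∧
    (∀ f g f' g' : (Fin 3 → F) ≃ₗ[F] (Fin 3 → F), IsKAut f → IsKAut g → IsKAut f' → IsKAut g' →
      Phi (⇑f' ∘ ⇑f) (⇑g' ∘ ⇑g) = Phi ⇑f' ⇑g' ∘ Phi ⇑f ⇑g) ∧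
    (∀ f g f' g' : (Fin 3 → F) ≃ₗ[F] (Fin 3 → F), IsKAut f → IsKAut g → IsKAut f' → IsKAut g' →
      Phi ⇑f ⇑g = Phi ⇑f' ⇑g' → ⇑f = ⇑f' ∧ ⇑g = ⇑g') := by
  constructor
  · intro f g hf hg
    obtain ⟨p, q, r, s, hd, hfa⟩ := exists_params f hf
    obtain ⟨p', q', r', s', hd', hga⟩ := exists_params g hg
    have hfe : ⇑f = fMk p q r s := funext hfa
    have hge : ⇑g = fMk p' q' r' s' := funext hga
    have hPhi : ∀ u, Phi ⇑f ⇑g u = phiE p q r s p' q' r' s' u := by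
      intro u; rw [hfe, hge, Phi_fMk]
    refine ⟨?_, ?_, ?_, ?_, ?_⟩
    · intro u v
      rw [hPhi, hPhi, hPhi, phiE_mul p q r s p' q' r' s' hd hd']
    · rw [hPhi, phiE_single]
    · refine Function.bijective_iff_has_inverse.mpr
        ⟨phiE s (-q) (-r) p s' (-q') (-r') p', fun u => ?_, fun u => ?_⟩
      · rw [hPhi, phiE_comp]
        rw [show s * p + -r * q = (1:F) by linear_combination hd,
            show -q * p + p * q = (0:F) by ring,
            show s * r + -r * s = (0:F) by ring,
            show -q * r + p * s = (1:F) by linear_combination hd,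
            show s' * p' + -r' * q' = (1:F) by linear_combination hd',
            show -q' * p' + p' * q' = (0:F) by ring,
            show s' * r' + -r' * s' = (0:F) by ring,
            show -q' * r' + p' * s' = (1:F) by linear_combination hd']
        exact phiE_id u
      · rw [hPhi, phiE_comp]
        rw [show p * s + r * -q = (1:F) by linear_combination hd,
            show q * s + s * -q = (0:F) by ring,
            show p * -r + r * p = (0:F) by ring,
            show q * -r + s * p = (1:F) by linear_combination hd,
            show p' * s' + r' * -q' = (1:F) by linear_combination hd',
            show q' * s' + s' * -q' = (0:F) by ring,
            show p' * -r' + r' * p' = (0:F) by ring,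
            show q' * -r' + s' * p' = (1:F) by linear_combination hd']
        exact phiE_id u
    · intro u hu
      obtain ⟨h6, h7, h8, h9⟩ := hu
      refine ⟨?_, ?_, ?_, ?_⟩
      · rw [hPhi, phiE_app6, h6, h8]; ring
      · rw [hPhi, phiE_app7, h7, h9]; ring
      · rw [hPhi, phiE_app8, h6, h8]; ring
      · rw [hPhi, phiE_app9, h7, h9]; ring
    · intro u hu
      obtain ⟨h0, h1, h2, h3, h4, h5⟩ := hu
      refine ⟨?_, ?_, ?_, ?_, ?_, ?_⟩
      · rw [hPhi, phiE_app0]; exact h0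
      · rw [hPhi, phiE_app1]; exact h1
      · rw [hPhi, phiE_app2, h2, h3, h4, h5]; ring
      · rw [hPhi, phiE_app3, h2, h3, h4, h5]; ring
      · rw [hPhi, phiE_app4, h2, h3, h4, h5]; ring
      · rw [hPhi, phiE_app5, h2, h3, h4, h5]; ring
  constructor
  · intro f g f' g' hf hg hf' hg'
    obtain ⟨p, q, r, s, hd, hfa⟩ := exists_params f hf
    obtain ⟨p', q', r', s', hd', hga⟩ := exists_params g hg
    obtain ⟨p2, q2, r2, s2, hd2, hf'a⟩ := exists_params f' hf'
    obtain ⟨p2', q2', r2', s2', hd2', hg'a⟩ := exists_params g' hg'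
    have hfe : ⇑f = fMk p q r s := funext hfa
    have hge : ⇑g = fMk p' q' r' s' := funext hga
    have hf'e : ⇑f' = fMk p2 q2 r2 s2 := funext hf'a
    have hg'e : ⇑g' = fMk p2' q2' r2' s2' := funext hg'a
    have hcf : ⇑f' ∘ ⇑f =
        fMk (p2 * p + r2 * q) (q2 * p + s2 * q) (p2 * r + r2 * s) (q2 * r + s2 * s) := by
      funext a
      simp only [Function.comp_apply]
      rw [hfa, hf'a, fMk_comp]
    have hcg : ⇑g' ∘ ⇑g =
        fMk (p2' * p' + r2' * q') (q2' * p' + s2' * q') (p2' * r' + r2' * s') (q2' * r' + s2' * s') := by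
      funext a
      simp only [Function.comp_apply]
      rw [hga, hg'a, fMk_comp]
    funext u
    rw [hcf, hcg, Phi_fMk]
    show _ = Phi ⇑f' ⇑g' (Phi ⇑f ⇑g u)
    rw [hfe, hge, Phi_fMk, hf'e, hg'e, Phi_fMk, phiE_comp]
  · intro f g f' g' hf hg hf' hg' hEq
    obtain ⟨p, q, r, s, hd, hfa⟩ := exists_params f hf
    obtain ⟨p', q', r', s', hd', hga⟩ := exists_params g hg
    obtain ⟨p2, q2, r2, s2, hd2, hf'a⟩ := exists_params f' hf'
    obtain ⟨p2', q2', r2', s2', hd2', hg'a⟩ := exists_params g' hg'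
    have hfe : ⇑f = fMk p q r s := funext hfa
    have hge : ⇑g = fMk p' q' r' s' := funext hga
    have hf'e : ⇑f' = fMk p2 q2 r2 s2 := funext hf'a
    have hg'e : ⇑g' = fMk p2' q2' r2' s2' := funext hg'a
    have hE : ∀ u, phiE p q r s p' q' r' s' u = phiE p2 q2 r2 s2 p2' q2' r2' s2' u := by
      intro u
      rw [← Phi_fMk, ← Phi_fMk, ← hfe, ← hge, ← hf'e, ← hg'e, hEq]
    have hx := hE (Pi.single 7 1)
    have hy := hE (Pi.single 9 1)
    have hx' := hE (Pi.single 6 1)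
    have hy' := hE (Pi.single 8 1)
    have e1 := congrFun hx 7
    have e2 := congrFun hx 9
    have e3 := congrFun hy 7
    have e4 := congrFun hy 9
    have e5 := congrFun hx' 6
    have e6 := congrFun hx' 8
    have e7 := congrFun hy' 6
    have e8 := congrFun hy' 8
    simp only [phiE_app6, phiE_app7, phiE_app8, phiE_app9, Pi.single_apply, eq_self_iff_true,
      if_true, if_false, mul_one, mul_zero, add_zero, zero_add,
      show ((9:Fin 10) = 7) = False from by decide, show ((7:Fin 10) = 9) = False from by decide,
      show ((8:Fin 10) = 6) = False from by decide, show ((6:Fin 10) = 8) = False from by decide]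
      at e1 e2 e3 e4 e5 e6 e7 e8
    constructor
    · rw [hfe, hf'e, e1, e2, e3, e4]
    · rw [hge, hg'e, e5, e6, e7, e8]
end

section
/- If λ, μ ∈ Fˣ are multiplicatively independent (i.e., λᵐμⁿ = 1 implies m = n = 0), then the eigenspace decomposition of K₁₀ under t_{λ,μ} is a ℤ×ℤ-grading with nine homogeneous components: J^{(0,0)} = span{1, e⊗e}, J^{(1,1)} = span{x⊗x}, J^{(1,-1)} = span{x⊗y}, J^{(-1,1)} = span{y⊗x}, J^{(-1,-1)} = span{y⊗y}, J^{(0,1)} = span{e⊗x}, J^{(1,0)} = span{x⊗e}, J^{(0,-1)} = span{e⊗y}, J^{(-1,0)} = span{y⊗e}, and all products satisfy J^{(m,n)}J^{(m',n')} ⊆ J^{(m+m',n+n')}. -/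
open Matrix BigOperators

variable {F : Type*} [Field F]

/-- The ℤ×ℤ-grading of K₁₀ given by the eigenspaces of t_{λ,μ}. -/
def zzComp (F : Type*) [Field F] : ℤ × ℤ → Submodule F (Fin 10 → F) := fun p =>
  if p = (0, 0) then Submodule.span F {Pi.single 0 1, Pi.single 1 1}
  else if p = (1, 1) then Submodule.span F {Pi.single 2 1}
  else if p = (1, -1) then Submodule.span F {Pi.single 3 1}
  else if p = (-1, 1) then Submodule.span F {Pi.single 4 1}
  else if p = (-1, -1) then Submodule.span F {Pi.single 5 1}
  else if p = (0, 1) then Submodule.span F {Pi.single 6 1}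
  else if p = (1, 0) then Submodule.span F {Pi.single 7 1}
  else if p = (0, -1) then Submodule.span F {Pi.single 8 1}
  else if p = (-1, 0) then Submodule.span F {Pi.single 9 1}
  else ⊥

section
variable {F : Type*} [Field F]

def cval (l m : Fˣ) : Fin 10 → F :=
  ![1, 1, (l:F)*(m:F), (l:F)*((m⁻¹:Fˣ):F), ((l⁻¹:Fˣ):F)*(m:F), ((l⁻¹:Fˣ):F)*((m⁻¹:Fˣ):F),
    (m:F), (l:F), ((m⁻¹:Fˣ):F), ((l⁻¹:Fˣ):F)]

@[simp] lemma cval_0 (l m : Fˣ) : (cval l m 0 : F) = 1 := rfl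
@[simp] lemma cval_1 (l m : Fˣ) : (cval l m 1 : F) = 1 := rfl
@[simp] lemma cval_2 (l m : Fˣ) : (cval l m 2 : F) = (l:F)*(m:F) := rfl
@[simp] lemma cval_3 (l m : Fˣ) : (cval l m 3 : F) = (l:F)*((m⁻¹:Fˣ):F) := rfl
@[simp] lemma cval_4 (l m : Fˣ) : (cval l m 4 : F) = ((l⁻¹:Fˣ):F)*(m:F) := rfl
@[simp] lemma cval_5 (l m : Fˣ) : (cval l m 5 : F) = ((l⁻¹:Fˣ):F)*((m⁻¹:Fˣ):F) := rfl
@[simp] lemma cval_6 (l m : Fˣ) : (cval l m 6 : F) = (m:F) := rfl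
@[simp] lemma cval_7 (l m : Fˣ) : (cval l m 7 : F) = (l:F) := rfl
@[simp] lemma cval_8 (l m : Fˣ) : (cval l m 8 : F) = ((m⁻¹:Fˣ):F) := rfl
@[simp] lemma cval_9 (l m : Fˣ) : (cval l m 9 : F) = ((l⁻¹:Fˣ):F) := rfl

lemma tK_single0 (l : Fˣ) : tK l (Pi.single 0 1) = ![(1:F),0,0] := by
  funext k; fin_cases k <;> simp [tK, Pi.single_apply]
lemma tK_single1 (l : Fˣ) : tK l (Pi.single 1 1) = ![(0:F),(l:F),0] := by
  funext k; fin_cases k <;> simp [tK, Pi.single_apply]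
lemma tK_single2 (l : Fˣ) : tK l (Pi.single 2 1) = ![(0:F),0,((l⁻¹:Fˣ):F)] := by
  funext k; fin_cases k <;> simp [tK, Pi.single_apply]

@[simp] lemma fstIdx_0 : (fstIdx 0 : Fin 3) = 0 := rfl
@[simp] lemma sndIdx_0 : (sndIdx 0 : Fin 3) = 0 := rfl
@[simp] lemma fstIdx_1 : (fstIdx 1 : Fin 3) = 0 := rfl
@[simp] lemma sndIdx_1 : (sndIdx 1 : Fin 3) = 0 := rfl
@[simp] lemma fstIdx_2 : (fstIdx 2 : Fin 3) = 1 := rfl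
@[simp] lemma sndIdx_2 : (sndIdx 2 : Fin 3) = 1 := rfl
@[simp] lemma fstIdx_3 : (fstIdx 3 : Fin 3) = 1 := rfl
@[simp] lemma sndIdx_3 : (sndIdx 3 : Fin 3) = 2 := rfl
@[simp] lemma fstIdx_4 : (fstIdx 4 : Fin 3) = 2 := rfl
@[simp] lemma sndIdx_4 : (sndIdx 4 : Fin 3) = 1 := rfl
@[simp] lemma fstIdx_5 : (fstIdx 5 : Fin 3) = 2 := rfl
@[simp] lemma sndIdx_5 : (sndIdx 5 : Fin 3) = 2 := rfl
@[simp] lemma fstIdx_6 : (fstIdx 6 : Fin 3) = 0 := rfl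
@[simp] lemma sndIdx_6 : (sndIdx 6 : Fin 3) = 1 := rfl
@[simp] lemma fstIdx_7 : (fstIdx 7 : Fin 3) = 1 := rfl
@[simp] lemma sndIdx_7 : (sndIdx 7 : Fin 3) = 0 := rfl
@[simp] lemma fstIdx_8 : (fstIdx 8 : Fin 3) = 0 := rfl
@[simp] lemma sndIdx_8 : (sndIdx 8 : Fin 3) = 2 := rfl
@[simp] lemma fstIdx_9 : (fstIdx 9 : Fin 3) = 2 := rfl
@[simp] lemma sndIdx_9 : (sndIdx 9 : Fin 3) = 0 := rfl


set_option maxHeartbeats 1000000 in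
lemma Phi_tK_apply (l m : Fˣ) (u : Fin 10 → F) :
    Phi (tK l) (tK m) u = fun k => cval l m k * u k := by
  funext k
  fin_cases k <;>
    simp [Phi, tensorVec, pairIdx, Fin.sum_univ_three,
      tK_single0, tK_single1, tK_single2] <;> ring
end

section
variable {F : Type*} [Field F]

@[simp] lemma k10Mul_apply_0 (u v : Fin 10 → F) : k10Mul u v 0 = (1 : F) * u 0 * v 0 + ((-3 : F)/16) * u 1 * v 1 + ((3 : F)/4) * u 2 * v 5 + ((-3 : F)/4) * u 3 * v 4 + ((-3 : F)/4) * u 4 * v 3 + ((3 : F)/4) * u 5 * v 2 + ((-3 : F)/8) * u 6 * v 8 + ((-3 : F)/8) * u 7 * v 9 + ((3 : F)/8) * u 8 * v 6 + ((3 : F)/8) * u 9 * v 7 := rfl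
@[simp] lemma k10Mul_apply_1 (u v : Fin 10 → F) : k10Mul u v 1 = (1 : F) * u 0 * v 1 + (1 : F) * u 1 * v 0 + (1 : F) * u 1 * v 1 + (-1 : F) * u 2 * v 5 + (1 : F) * u 3 * v 4 + (1 : F) * u 4 * v 3 + (-1 : F) * u 5 * v 2 + (1 : F) * u 6 * v 8 + (1 : F) * u 7 * v 9 + (-1 : F) * u 8 * v 6 + (-1 : F) * u 9 * v 7 := rfl
@[simp] lemma k10Mul_apply_2 (u v : Fin 10 → F) : k10Mul u v 2 = (1 : F) * u 0 * v 2 + ((1 : F)/4) * u 1 * v 2 + (1 : F) * u 2 * v 0 + ((1 : F)/4) * u 2 * v 1 + ((-1 : F)/4) * u 6 * v 7 + ((1 : F)/4) * u 7 * v 6 := rfl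
@[simp] lemma k10Mul_apply_3 (u v : Fin 10 → F) : k10Mul u v 3 = (1 : F) * u 0 * v 3 + ((1 : F)/4) * u 1 * v 3 + (1 : F) * u 3 * v 0 + ((1 : F)/4) * u 3 * v 1 + ((1 : F)/4) * u 7 * v 8 + ((-1 : F)/4) * u 8 * v 7 := rfl
@[simp] lemma k10Mul_apply_4 (u v : Fin 10 → F) : k10Mul u v 4 = (1 : F) * u 0 * v 4 + ((1 : F)/4) * u 1 * v 4 + (1 : F) * u 4 * v 0 + ((1 : F)/4) * u 4 * v 1 + ((-1 : F)/4) * u 6 * v 9 + ((1 : F)/4) * u 9 * v 6 := rfl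
@[simp] lemma k10Mul_apply_5 (u v : Fin 10 → F) : k10Mul u v 5 = (1 : F) * u 0 * v 5 + ((1 : F)/4) * u 1 * v 5 + (1 : F) * u 5 * v 0 + ((1 : F)/4) * u 5 * v 1 + ((-1 : F)/4) * u 8 * v 9 + ((1 : F)/4) * u 9 * v 8 := rfl
@[simp] lemma k10Mul_apply_6 (u v : Fin 10 → F) : k10Mul u v 6 = (1 : F) * u 0 * v 6 + ((1 : F)/2) * u 1 * v 6 + ((-1 : F)/2) * u 2 * v 9 + ((1 : F)/2) * u 4 * v 7 + (1 : F) * u 6 * v 0 + ((1 : F)/2) * u 6 * v 1 + ((1 : F)/2) * u 7 * v 4 + ((-1 : F)/2) * u 9 * v 2 := rfl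
@[simp] lemma k10Mul_apply_7 (u v : Fin 10 → F) : k10Mul u v 7 = (1 : F) * u 0 * v 7 + ((1 : F)/2) * u 1 * v 7 + ((1 : F)/2) * u 2 * v 8 + ((-1 : F)/2) * u 3 * v 6 + ((-1 : F)/2) * u 6 * v 3 + (1 : F) * u 7 * v 0 + ((1 : F)/2) * u 7 * v 1 + ((1 : F)/2) * u 8 * v 2 := rfl
@[simp] lemma k10Mul_apply_8 (u v : Fin 10 → F) : k10Mul u v 8 = (1 : F) * u 0 * v 8 + ((1 : F)/2) * u 1 * v 8 + ((-1 : F)/2) * u 3 * v 9 + ((1 : F)/2) * u 5 * v 7 + ((1 : F)/2) * u 7 * v 5 + (1 : F) * u 8 * v 0 + ((1 : F)/2) * u 8 * v 1 + ((-1 : F)/2) * u 9 * v 3 := rfl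
@[simp] lemma k10Mul_apply_9 (u v : Fin 10 → F) : k10Mul u v 9 = (1 : F) * u 0 * v 9 + ((1 : F)/2) * u 1 * v 9 + ((1 : F)/2) * u 4 * v 8 + ((-1 : F)/2) * u 5 * v 6 + ((-1 : F)/2) * u 6 * v 5 + ((1 : F)/2) * u 8 * v 4 + (1 : F) * u 9 * v 0 + ((1 : F)/2) * u 9 * v 1 := rfl


lemma k10Mul_smul (s t : F) (u v : Fin 10 → F) :
    k10Mul (s • u) (t • v) = (s * t) • k10Mul u v := by
  funext k
  fin_cases k
  · show k10Mul (s • u) (t • v) 0 = ((s * t) • k10Mul u v) 0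
    simp only [k10Mul_apply_0, k10Mul_apply_1, k10Mul_apply_2, k10Mul_apply_3, k10Mul_apply_4, k10Mul_apply_5, k10Mul_apply_6, k10Mul_apply_7, k10Mul_apply_8, k10Mul_apply_9, cval_0, cval_1, cval_2, cval_3, cval_4, cval_5, cval_6, cval_7, cval_8, cval_9, Pi.smul_apply, smul_eq_mul, Units.val_inv_eq_inv_val] <;> ring
  · show k10Mul (s • u) (t • v) 1 = ((s * t) • k10Mul u v) 1
    simp only [k10Mul_apply_0, k10Mul_apply_1, k10Mul_apply_2, k10Mul_apply_3, k10Mul_apply_4, k10Mul_apply_5, k10Mul_apply_6, k10Mul_apply_7, k10Mul_apply_8, k10Mul_apply_9, cval_0, cval_1, cval_2, cval_3, cval_4, cval_5, cval_6, cval_7, cval_8, cval_9, Pi.smul_apply, smul_eq_mul, Units.val_inv_eq_inv_val] <;> ring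
  · show k10Mul (s • u) (t • v) 2 = ((s * t) • k10Mul u v) 2
    simp only [k10Mul_apply_0, k10Mul_apply_1, k10Mul_apply_2, k10Mul_apply_3, k10Mul_apply_4, k10Mul_apply_5, k10Mul_apply_6, k10Mul_apply_7, k10Mul_apply_8, k10Mul_apply_9, cval_0, cval_1, cval_2, cval_3, cval_4, cval_5, cval_6, cval_7, cval_8, cval_9, Pi.smul_apply, smul_eq_mul, Units.val_inv_eq_inv_val] <;> ring
  · show k10Mul (s • u) (t • v) 3 = ((s * t) • k10Mul u v) 3
    simp only [k10Mul_apply_0, k10Mul_apply_1, k10Mul_apply_2, k10Mul_apply_3, k10Mul_apply_4, k10Mul_apply_5, k10Mul_apply_6, k10Mul_apply_7, k10Mul_apply_8, k10Mul_apply_9, cval_0, cval_1, cval_2, cval_3, cval_4, cval_5, cval_6, cval_7, cval_8, cval_9, Pi.smul_apply, smul_eq_mul, Units.val_inv_eq_inv_val] <;> ring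
  · show k10Mul (s • u) (t • v) 4 = ((s * t) • k10Mul u v) 4
    simp only [k10Mul_apply_0, k10Mul_apply_1, k10Mul_apply_2, k10Mul_apply_3, k10Mul_apply_4, k10Mul_apply_5, k10Mul_apply_6, k10Mul_apply_7, k10Mul_apply_8, k10Mul_apply_9, cval_0, cval_1, cval_2, cval_3, cval_4, cval_5, cval_6, cval_7, cval_8, cval_9, Pi.smul_apply, smul_eq_mul, Units.val_inv_eq_inv_val] <;> ring
  · show k10Mul (s • u) (t • v) 5 = ((s * t) • k10Mul u v) 5
    simp only [k10Mul_apply_0, k10Mul_apply_1, k10Mul_apply_2, k10Mul_apply_3, k10Mul_apply_4, k10Mul_apply_5, k10Mul_apply_6, k10Mul_apply_7, k10Mul_apply_8, k10Mul_apply_9, cval_0, cval_1, cval_2, cval_3, cval_4, cval_5, cval_6, cval_7, cval_8, cval_9, Pi.smul_apply, smul_eq_mul, Units.val_inv_eq_inv_val] <;> ring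
  · show k10Mul (s • u) (t • v) 6 = ((s * t) • k10Mul u v) 6
    simp only [k10Mul_apply_0, k10Mul_apply_1, k10Mul_apply_2, k10Mul_apply_3, k10Mul_apply_4, k10Mul_apply_5, k10Mul_apply_6, k10Mul_apply_7, k10Mul_apply_8, k10Mul_apply_9, cval_0, cval_1, cval_2, cval_3, cval_4, cval_5, cval_6, cval_7, cval_8, cval_9, Pi.smul_apply, smul_eq_mul, Units.val_inv_eq_inv_val] <;> ring
  · show k10Mul (s • u) (t • v) 7 = ((s * t) • k10Mul u v) 7
    simp only [k10Mul_apply_0, k10Mul_apply_1, k10Mul_apply_2, k10Mul_apply_3, k10Mul_apply_4, k10Mul_apply_5, k10Mul_apply_6, k10Mul_apply_7, k10Mul_apply_8, k10Mul_apply_9, cval_0, cval_1, cval_2, cval_3, cval_4, cval_5, cval_6, cval_7, cval_8, cval_9, Pi.smul_apply, smul_eq_mul, Units.val_inv_eq_inv_val] <;> ring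
  · show k10Mul (s • u) (t • v) 8 = ((s * t) • k10Mul u v) 8
    simp only [k10Mul_apply_0, k10Mul_apply_1, k10Mul_apply_2, k10Mul_apply_3, k10Mul_apply_4, k10Mul_apply_5, k10Mul_apply_6, k10Mul_apply_7, k10Mul_apply_8, k10Mul_apply_9, cval_0, cval_1, cval_2, cval_3, cval_4, cval_5, cval_6, cval_7, cval_8, cval_9, Pi.smul_apply, smul_eq_mul, Units.val_inv_eq_inv_val] <;> ring
  · show k10Mul (s • u) (t • v) 9 = ((s * t) • k10Mul u v) 9
    simp only [k10Mul_apply_0, k10Mul_apply_1, k10Mul_apply_2, k10Mul_apply_3, k10Mul_apply_4, k10Mul_apply_5, k10Mul_apply_6, k10Mul_apply_7, k10Mul_apply_8, k10Mul_apply_9, cval_0, cval_1, cval_2, cval_3, cval_4, cval_5, cval_6, cval_7, cval_8, cval_9, Pi.smul_apply, smul_eq_mul, Units.val_inv_eq_inv_val] <;> ring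

set_option maxHeartbeats 1000000 in
lemma cval_mul_k10Mul (l m : Fˣ) (u v : Fin 10 → F) :
    (fun k => cval l m k * k10Mul u v k) =
      k10Mul (fun k => cval l m k * u k) (fun k => cval l m k * v k) := by
  have hL : (l:F) * ((l⁻¹:Fˣ):F) = 1 := Units.mul_inv l
  have hM : (m:F) * ((m⁻¹:Fˣ):F) = 1 := Units.mul_inv m
  funext k
  fin_cases k
  · show cval l m 0 * k10Mul u v 0 = k10Mul (fun j => cval l m j * u j) (fun j => cval l m j * v j) 0
    simp only [k10Mul_apply_0, k10Mul_apply_1, k10Mul_apply_2, k10Mul_apply_3, k10Mul_apply_4, k10Mul_apply_5, k10Mul_apply_6, k10Mul_apply_7, k10Mul_apply_8, k10Mul_apply_9, cval_0, cval_1, cval_2, cval_3, cval_4, cval_5, cval_6, cval_7, cval_8, cval_9]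
    linear_combination (-((3/4:F) * u 2 * v 5 * 1) * ((m:F)*((m⁻¹:Fˣ):F))) * hL + (-((3/4:F) * u 2 * v 5 * 1)) * hM + (-((-3/4:F) * u 3 * v 4 * 1) * ((m:F)*((m⁻¹:Fˣ):F))) * hL + (-((-3/4:F) * u 3 * v 4 * 1)) * hM + (-((-3/4:F) * u 4 * v 3 * 1) * ((m:F)*((m⁻¹:Fˣ):F))) * hL + (-((-3/4:F) * u 4 * v 3 * 1)) * hM + (-((3/4:F) * u 5 * v 2 * 1) * ((m:F)*((m⁻¹:Fˣ):F))) * hL + (-((3/4:F) * u 5 * v 2 * 1)) * hM + (-((-3/8:F) * u 6 * v 8 * 1)) * hM + (-((-3/8:F) * u 7 * v 9 * 1)) * hL + (-((3/8:F) * u 8 * v 6 * 1)) * hM + (-((3/8:F) * u 9 * v 7 * 1)) * hL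
  · show cval l m 1 * k10Mul u v 1 = k10Mul (fun j => cval l m j * u j) (fun j => cval l m j * v j) 1
    simp only [k10Mul_apply_0, k10Mul_apply_1, k10Mul_apply_2, k10Mul_apply_3, k10Mul_apply_4, k10Mul_apply_5, k10Mul_apply_6, k10Mul_apply_7, k10Mul_apply_8, k10Mul_apply_9, cval_0, cval_1, cval_2, cval_3, cval_4, cval_5, cval_6, cval_7, cval_8, cval_9]
    linear_combination (-((-1:F) * u 2 * v 5 * 1) * ((m:F)*((m⁻¹:Fˣ):F))) * hL + (-((-1:F) * u 2 * v 5 * 1)) * hM + (-((1:F) * u 3 * v 4 * 1) * ((m:F)*((m⁻¹:Fˣ):F))) * hL + (-((1:F) * u 3 * v 4 * 1)) * hM + (-((1:F) * u 4 * v 3 * 1) * ((m:F)*((m⁻¹:Fˣ):F))) * hL + (-((1:F) * u 4 * v 3 * 1)) * hM + (-((-1:F) * u 5 * v 2 * 1) * ((m:F)*((m⁻¹:Fˣ):F))) * hL + (-((-1:F) * u 5 * v 2 * 1)) * hM + (-((1:F) * u 6 * v 8 * 1)) * hM + (-((1:F) * u 7 * v 9 * 1)) * hL + (-((-1:F) *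 u 8 * v 6 * 1)) * hM + (-((-1:F) * u 9 * v 7 * 1)) * hL
  · show cval l m 2 * k10Mul u v 2 = k10Mul (fun j => cval l m j * u j) (fun j => cval l m j * v j) 2
    simp only [k10Mul_apply_0, k10Mul_apply_1, k10Mul_apply_2, k10Mul_apply_3, k10Mul_apply_4, k10Mul_apply_5, k10Mul_apply_6, k10Mul_apply_7, k10Mul_apply_8, k10Mul_apply_9, cval_0, cval_1, cval_2, cval_3, cval_4, cval_5, cval_6, cval_7, cval_8, cval_9]
    ring
  · show cval l m 3 * k10Mul u v 3 = k10Mul (fun j => cval l m j * u j) (fun j => cval l m j * v j) 3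
    simp only [k10Mul_apply_0, k10Mul_apply_1, k10Mul_apply_2, k10Mul_apply_3, k10Mul_apply_4, k10Mul_apply_5, k10Mul_apply_6, k10Mul_apply_7, k10Mul_apply_8, k10Mul_apply_9, cval_0, cval_1, cval_2, cval_3, cval_4, cval_5, cval_6, cval_7, cval_8, cval_9]
    ring
  · show cval l m 4 * k10Mul u v 4 = k10Mul (fun j => cval l m j * u j) (fun j => cval l m j * v j) 4
    simp only [k10Mul_apply_0, k10Mul_apply_1, k10Mul_apply_2, k10Mul_apply_3, k10Mul_apply_4, k10Mul_apply_5, k10Mul_apply_6, k10Mul_apply_7, k10Mul_apply_8, k10Mul_apply_9, cval_0, cval_1, cval_2, cval_3, cval_4, cval_5, cval_6, cval_7, cval_8, cval_9]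
    ring
  · show cval l m 5 * k10Mul u v 5 = k10Mul (fun j => cval l m j * u j) (fun j => cval l m j * v j) 5
    simp only [k10Mul_apply_0, k10Mul_apply_1, k10Mul_apply_2, k10Mul_apply_3, k10Mul_apply_4, k10Mul_apply_5, k10Mul_apply_6, k10Mul_apply_7, k10Mul_apply_8, k10Mul_apply_9, cval_0, cval_1, cval_2, cval_3, cval_4, cval_5, cval_6, cval_7, cval_8, cval_9]
    ring
  · show cval l m 6 * k10Mul u v 6 = k10Mul (fun j => cval l m j * u j) (fun j => cval l m j * v j) 6
    simp only [k10Mul_apply_0, k10Mul_apply_1, k10Mul_apply_2, k10Mul_apply_3, k10Mul_apply_4, k10Mul_apply_5, k10Mul_apply_6, k10Mul_apply_7, k10Mul_apply_8, k10Mul_apply_9, cval_0, cval_1, cval_2, cval_3, cval_4, cval_5, cval_6, cval_7, cval_8, cval_9]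
    linear_combination (-((-1/2:F) * u 2 * v 9 * (m:F))) * hL + (-((1/2:F) * u 4 * v 7 * (m:F))) * hL + (-((1/2:F) * u 7 * v 4 * (m:F))) * hL + (-((-1/2:F) * u 9 * v 2 * (m:F))) * hL
  · show cval l m 7 * k10Mul u v 7 = k10Mul (fun j => cval l m j * u j) (fun j => cval l m j * v j) 7
    simp only [k10Mul_apply_0, k10Mul_apply_1, k10Mul_apply_2, k10Mul_apply_3, k10Mul_apply_4, k10Mul_apply_5, k10Mul_apply_6, k10Mul_apply_7, k10Mul_apply_8, k10Mul_apply_9, cval_0, cval_1, cval_2, cval_3, cval_4, cval_5, cval_6, cval_7, cval_8, cval_9]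
    linear_combination (-((1/2:F) * u 2 * v 8 * (l:F))) * hM + (-((-1/2:F) * u 3 * v 6 * (l:F))) * hM + (-((-1/2:F) * u 6 * v 3 * (l:F))) * hM + (-((1/2:F) * u 8 * v 2 * (l:F))) * hM
  · show cval l m 8 * k10Mul u v 8 = k10Mul (fun j => cval l m j * u j) (fun j => cval l m j * v j) 8
    simp only [k10Mul_apply_0, k10Mul_apply_1, k10Mul_apply_2, k10Mul_apply_3, k10Mul_apply_4, k10Mul_apply_5, k10Mul_apply_6, k10Mul_apply_7, k10Mul_apply_8, k10Mul_apply_9, cval_0, cval_1, cval_2, cval_3, cval_4, cval_5, cval_6, cval_7, cval_8, cval_9]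
    linear_combination (-((-1/2:F) * u 3 * v 9 * ((m⁻¹:Fˣ):F))) * hL + (-((1/2:F) * u 5 * v 7 * ((m⁻¹:Fˣ):F))) * hL + (-((1/2:F) * u 7 * v 5 * ((m⁻¹:Fˣ):F))) * hL + (-((-1/2:F) * u 9 * v 3 * ((m⁻¹:Fˣ):F))) * hL
  · show cval l m 9 * k10Mul u v 9 = k10Mul (fun j => cval l m j * u j) (fun j => cval l m j * v j) 9
    simp only [k10Mul_apply_0, k10Mul_apply_1, k10Mul_apply_2, k10Mul_apply_3, k10Mul_apply_4, k10Mul_apply_5, k10Mul_apply_6, k10Mul_apply_7, k10Mul_apply_8, k10Mul_apply_9, cval_0, cval_1, cval_2, cval_3, cval_4, cval_5, cval_6, cval_7, cval_8, cval_9]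
    linear_combination (-((1/2:F) * u 4 * v 8 * ((l⁻¹:Fˣ):F))) * hM + (-((-1/2:F) * u 5 * v 6 * ((l⁻¹:Fˣ):F))) * hM + (-((-1/2:F) * u 6 * v 5 * ((l⁻¹:Fˣ):F))) * hM + (-((1/2:F) * u 8 * v 4 * ((l⁻¹:Fˣ):F))) * hM
end

def zzexp : Fin 10 → ℤ × ℤ := ![(0,0),(0,0),(1,1),(1,-1),(-1,1),(-1,-1),(0,1),(1,0),(0,-1),(-1,0)]

@[simp] lemma zzexp_0 : zzexp 0 = (0,0) := rfl
@[simp] lemma zzexp_1 : zzexp 1 = (0,0) := rfl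
@[simp] lemma zzexp_2 : zzexp 2 = (1,1) := rfl
@[simp] lemma zzexp_3 : zzexp 3 = (1,-1) := rfl
@[simp] lemma zzexp_4 : zzexp 4 = (-1,1) := rfl
@[simp] lemma zzexp_5 : zzexp 5 = (-1,-1) := rfl
@[simp] lemma zzexp_6 : zzexp 6 = (0,1) := rfl
@[simp] lemma zzexp_7 : zzexp 7 = (1,0) := rfl
@[simp] lemma zzexp_8 : zzexp 8 = (0,-1) := rfl
@[simp] lemma zzexp_9 : zzexp 9 = (-1,0) := rfl


section
variable {F : Type*} [Field F]

lemma cval_eq_unit (l m : Fˣ) (k : Fin 10) :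
    cval l m k = ((l ^ (zzexp k).1 * m ^ (zzexp k).2 : Fˣ) : F) := by
  fin_cases k
  · show cval l m 0 = ((l ^ (zzexp (0:Fin 10)).1 * m ^ (zzexp (0:Fin 10)).2 : Fˣ) : F)
    simp [cval_0, zzexp_0, zpow_one, zpow_zero, _root_.zpow_neg_one, Units.val_mul]
  · show cval l m 1 = ((l ^ (zzexp (1:Fin 10)).1 * m ^ (zzexp (1:Fin 10)).2 : Fˣ) : F)
    simp [cval_1, zzexp_1, zpow_one, zpow_zero, _root_.zpow_neg_one, Units.val_mul]
  · show cval l m 2 = ((l ^ (zzexp (2:Fin 10)).1 * m ^ (zzexp (2:Fin 10)).2 : Fˣ) : F)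
    simp [cval_2, zzexp_2, zpow_one, zpow_zero, _root_.zpow_neg_one, Units.val_mul]
  · show cval l m 3 = ((l ^ (zzexp (3:Fin 10)).1 * m ^ (zzexp (3:Fin 10)).2 : Fˣ) : F)
    simp [cval_3, zzexp_3, zpow_one, zpow_zero, _root_.zpow_neg_one, Units.val_mul]
  · show cval l m 4 = ((l ^ (zzexp (4:Fin 10)).1 * m ^ (zzexp (4:Fin 10)).2 : Fˣ) : F)
    simp [cval_4, zzexp_4, zpow_one, zpow_zero, _root_.zpow_neg_one, Units.val_mul]
  · show cval l m 5 = ((l ^ (zzexp (5:Fin 10)).1 * m ^ (zzexp (5:Fin 10)).2 : Fˣ) : F)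
    simp [cval_5, zzexp_5, zpow_one, zpow_zero, _root_.zpow_neg_one, Units.val_mul]
  · show cval l m 6 = ((l ^ (zzexp (6:Fin 10)).1 * m ^ (zzexp (6:Fin 10)).2 : Fˣ) : F)
    simp [cval_6, zzexp_6, zpow_one, zpow_zero, _root_.zpow_neg_one, Units.val_mul]
  · show cval l m 7 = ((l ^ (zzexp (7:Fin 10)).1 * m ^ (zzexp (7:Fin 10)).2 : Fˣ) : F)
    simp [cval_7, zzexp_7, zpow_one, zpow_zero, _root_.zpow_neg_one, Units.val_mul]
  · show cval l m 8 = ((l ^ (zzexp (8:Fin 10)).1 * m ^ (zzexp (8:Fin 10)).2 : Fˣ) : F)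
    simp [cval_8, zzexp_8, zpow_one, zpow_zero, _root_.zpow_neg_one, Units.val_mul]
  · show cval l m 9 = ((l ^ (zzexp (9:Fin 10)).1 * m ^ (zzexp (9:Fin 10)).2 : Fˣ) : F)
    simp [cval_9, zzexp_9, zpow_one, zpow_zero, _root_.zpow_neg_one, Units.val_mul]

lemma mem_span_single_iff (i : Fin 10) (u : Fin 10 → F) :
    u ∈ Submodule.span F {Pi.single i 1} ↔ ∀ k, k ≠ i → u k = 0 := by
  rw [Submodule.mem_span_singleton]
  constructor
  · rintro ⟨c, rfl⟩ k hk
    simp [Pi.single_apply, hk]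
  · intro h
    refine ⟨u i, ?_⟩
    funext k
    by_cases hk : k = i
    · subst hk; simp
    · simp [Pi.single_apply, hk, h k hk]

lemma mem_span_pair_iff (u : Fin 10 → F) :
    u ∈ Submodule.span F {Pi.single 0 1, Pi.single 1 1} ↔
      ∀ k : Fin 10, k ≠ 0 → k ≠ 1 → u k = 0 := by
  rw [Submodule.mem_span_pair]
  constructor
  · rintro ⟨a, b, rfl⟩ k h0 h1
    simp [Pi.single_apply, h0, h1]
  · intro h
    refine ⟨u 0, u 1, ?_⟩
    funext k
    by_cases h0 : k = 0
    · subst h0; simp [Pi.single_apply]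
    · by_cases h1 : k = 1
      · subst h1; simp [Pi.single_apply]
      · simp [Pi.single_apply, h0, h1, h k h0 h1]
end

/-- If λ, μ are multiplicatively independent, the eigenspace decomposition of K₁₀ under
t_{λ,μ} is the ℤ×ℤ-grading with the nine listed homogeneous components, and products
satisfy J^{(m,n)} J^{(m',n')} ⊆ J^{(m+m',n+n')}. -/
theorem k10_zz_grading {F : Type*} [Field F] [IsAlgClosed F] [CharZero F] (l m : Fˣ)
    (hind : ∀ a b : ℤ, l ^ a * m ^ b = 1 → a = 0 ∧ b = 0) :
    (∀ (p : ℤ × ℤ) (u : Fin 10 → F),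
      Phi (tK l) (tK m) u = (((l : F) ^ p.1 * (m : F) ^ p.2) • u) ↔ u ∈ zzComp F p) ∧
    (∀ (p q : ℤ × ℤ) (u v : Fin 10 → F),
      u ∈ zzComp F p → v ∈ zzComp F q → k10Mul u v ∈ zzComp F (p + q)) := by
  have hinj : ∀ p q : ℤ × ℤ, (l ^ p.1 * m ^ p.2 : Fˣ) = l ^ q.1 * m ^ q.2 → p = q := by
    intro p q h
    have h2 : l ^ (p.1 - q.1) * m ^ (p.2 - q.2) = 1 := by
      rw [_root_.zpow_sub, _root_.zpow_sub, mul_mul_mul_comm, ← mul_inv, h, mul_inv_cancel]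
    obtain ⟨h3, h4⟩ := hind _ _ h2
    exact Prod.ext (by omega) (by omega)
  have hscal : ∀ p : ℤ × ℤ, ((l:F) ^ p.1 * (m:F) ^ p.2) = ((l ^ p.1 * m ^ p.2 : Fˣ) : F) := by
    intro p; simp [Units.val_mul, Units.val_zpow_eq_zpow_val]
  have key : ∀ (p : ℤ × ℤ) (u : Fin 10 → F),
      Phi (tK l) (tK m) u = (((l : F) ^ p.1 * (m : F) ^ p.2) • u) ↔
        ∀ k, u k = 0 ∨ zzexp k = p := by
    intro p u
    rw [Phi_tK_apply, funext_iff]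
    constructor
    · intro h k
      by_cases hu : u k = 0
      · exact Or.inl hu
      · right
        have hk := h k
        rw [Pi.smul_apply, smul_eq_mul] at hk
        have hc : cval l m k = (l:F) ^ p.1 * (m:F) ^ p.2 := mul_right_cancel₀ hu hk
        rw [cval_eq_unit, hscal] at hc
        exact hinj _ _ (Units.ext hc)
    · intro h k
      rw [Pi.smul_apply, smul_eq_mul]
      rcases h k with h0 | he
      · rw [h0, mul_zero, mul_zero]
      · rw [cval_eq_unit, he, hscal]
  have hmem9 : ∀ k : Fin 10, zzexp k = (0,0) ∨ zzexp k = (1,1) ∨ zzexp k = (1,-1) ∨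
      zzexp k = (-1,1) ∨ zzexp k = (-1,-1) ∨ zzexp k = (0,1) ∨ zzexp k = (1,0) ∨
      zzexp k = (0,-1) ∨ zzexp k = (-1,0) := by decide
  have memiff : ∀ (p : ℤ × ℤ) (u : Fin 10 → F),
      (∀ k, u k = 0 ∨ zzexp k = p) ↔ u ∈ zzComp F p := by
    intro p u
    by_cases h0 : p = ((0,0) : ℤ × ℤ)
    · subst h0
      have hz : zzComp F (0,0) = Submodule.span F {Pi.single 0 1, Pi.single 1 1} := by
        norm_num [zzComp]
      have hx : ∀ k : Fin 10, zzexp k = (0,0) → k = 0 ∨ k = 1 := by decide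
      rw [hz, mem_span_pair_iff]
      constructor
      · intro h k hk0 hk1
        rcases h k with hu | he
        · exact hu
        · rcases hx k he with h' | h' <;> [exact absurd h' hk0; exact absurd h' hk1]
      · intro h k
        by_cases hk0 : k = 0
        · subst hk0; right; rfl
        · by_cases hk1 : k = 1
          · subst hk1; right; rfl
          · exact Or.inl (h k hk0 hk1)
    by_cases h1 : p = ((1,1) : ℤ × ℤ)
    · subst h1
      have hz : zzComp F ((1,1)) = Submodule.span F {Pi.single 2 1} := by
        norm_num [zzComp]
      have hx : ∀ k : Fin 10, zzexp k = ((1,1)) → k = 2 := by decide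
      rw [hz, mem_span_single_iff]
      constructor
      · intro h k hk
        rcases h k with hu | he
        · exact hu
        · exact absurd (hx k he) hk
      · intro h k
        by_cases hk : k = 2
        · subst hk; right; rfl
        · exact Or.inl (h k hk)
    by_cases h2 : p = ((1,-1) : ℤ × ℤ)
    · subst h2
      have hz : zzComp F ((1,-1)) = Submodule.span F {Pi.single 3 1} := by
        norm_num [zzComp]
      have hx : ∀ k : Fin 10, zzexp k = ((1,-1)) → k = 3 := by decide
      rw [hz, mem_span_single_iff]
      constructor
      · intro h k hk
        rcases h k with hu | he
        · exact hu
        · exact absurd (hx k he) hk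
      · intro h k
        by_cases hk : k = 3
        · subst hk; right; rfl
        · exact Or.inl (h k hk)
    by_cases h3 : p = ((-1,1) : ℤ × ℤ)
    · subst h3
      have hz : zzComp F ((-1,1)) = Submodule.span F {Pi.single 4 1} := by
        norm_num [zzComp]
      have hx : ∀ k : Fin 10, zzexp k = ((-1,1)) → k = 4 := by decide
      rw [hz, mem_span_single_iff]
      constructor
      · intro h k hk
        rcases h k with hu | he
        · exact hu
        · exact absurd (hx k he) hk
      · intro h k
        by_cases hk : k = 4
        · subst hk; right; rfl
        · exact Or.inl (h k hk)
    by_cases h4 : p = ((-1,-1) : ℤ × ℤ)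
    · subst h4
      have hz : zzComp F ((-1,-1)) = Submodule.span F {Pi.single 5 1} := by
        norm_num [zzComp]
      have hx : ∀ k : Fin 10, zzexp k = ((-1,-1)) → k = 5 := by decide
      rw [hz, mem_span_single_iff]
      constructor
      · intro h k hk
        rcases h k with hu | he
        · exact hu
        · exact absurd (hx k he) hk
      · intro h k
        by_cases hk : k = 5
        · subst hk; right; rfl
        · exact Or.inl (h k hk)
    by_cases h5 : p = ((0,1) : ℤ × ℤ)
    · subst h5
      have hz : zzComp F ((0,1)) = Submodule.span F {Pi.single 6 1} := by
        norm_num [zzComp]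
      have hx : ∀ k : Fin 10, zzexp k = ((0,1)) → k = 6 := by decide
      rw [hz, mem_span_single_iff]
      constructor
      · intro h k hk
        rcases h k with hu | he
        · exact hu
        · exact absurd (hx k he) hk
      · intro h k
        by_cases hk : k = 6
        · subst hk; right; rfl
        · exact Or.inl (h k hk)
    by_cases h6 : p = ((1,0) : ℤ × ℤ)
    · subst h6
      have hz : zzComp F ((1,0)) = Submodule.span F {Pi.single 7 1} := by
        norm_num [zzComp]
      have hx : ∀ k : Fin 10, zzexp k = ((1,0)) → k = 7 := by decide
      rw [hz, mem_span_single_iff]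
      constructor
      · intro h k hk
        rcases h k with hu | he
        · exact hu
        · exact absurd (hx k he) hk
      · intro h k
        by_cases hk : k = 7
        · subst hk; right; rfl
        · exact Or.inl (h k hk)
    by_cases h7 : p = ((0,-1) : ℤ × ℤ)
    · subst h7
      have hz : zzComp F ((0,-1)) = Submodule.span F {Pi.single 8 1} := by
        norm_num [zzComp]
      have hx : ∀ k : Fin 10, zzexp k = ((0,-1)) → k = 8 := by decide
      rw [hz, mem_span_single_iff]
      constructor
      · intro h k hk
        rcases h k with hu | he
        · exact hu
        · exact absurd (hx k he) hk
      · intro h k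
        by_cases hk : k = 8
        · subst hk; right; rfl
        · exact Or.inl (h k hk)
    by_cases h8 : p = ((-1,0) : ℤ × ℤ)
    · subst h8
      have hz : zzComp F ((-1,0)) = Submodule.span F {Pi.single 9 1} := by
        norm_num [zzComp]
      have hx : ∀ k : Fin 10, zzexp k = ((-1,0)) → k = 9 := by decide
      rw [hz, mem_span_single_iff]
      constructor
      · intro h k hk
        rcases h k with hu | he
        · exact hu
        · exact absurd (hx k he) hk
      · intro h k
        by_cases hk : k = 9
        · subst hk; right; rfl
        · exact Or.inl (h k hk)
    have hz : zzComp F p = ⊥ := by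
      simp only [zzComp, if_neg h0, if_neg h1, if_neg h2, if_neg h3, if_neg h4, if_neg h5, if_neg h6, if_neg h7, if_neg h8]
    rw [hz, Submodule.mem_bot]
    constructor
    · intro h
      funext k
      rcases h k with hu | he
      · exact hu
      · exfalso
        rcases hmem9 k with h'|h'|h'|h'|h'|h'|h'|h'|h' <;> rw [he] at h' <;>
          [exact h0 h'; exact h1 h'; exact h2 h'; exact h3 h'; exact h4 h'; exact h5 h';
           exact h6 h'; exact h7 h'; exact h8 h']
    · rintro rfl k
      left; rfl
  have main1 : ∀ (p : ℤ × ℤ) (u : Fin 10 → F),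
      Phi (tK l) (tK m) u = (((l : F) ^ p.1 * (m : F) ^ p.2) • u) ↔ u ∈ zzComp F p :=
    fun p u => (key p u).trans (memiff p u)
  refine ⟨main1, ?_⟩
  intro p q u v hu hv
  have hu' := (main1 p u).mpr hu
  have hv' := (main1 q v).mpr hv
  apply (main1 (p + q) (k10Mul u v)).mp
  have hmulPhi : Phi (tK l) (tK m) (k10Mul u v) =
      k10Mul (Phi (tK l) (tK m) u) (Phi (tK l) (tK m) v) := by
    rw [Phi_tK_apply l m (k10Mul u v), Phi_tK_apply l m u, Phi_tK_apply l m v]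
    exact cval_mul_k10Mul l m u v
  rw [hmulPhi, hu', hv', k10Mul_smul]
  congr 1
  rw [Prod.fst_add, Prod.snd_add, zpow_add₀ l.ne_zero, zpow_add₀ m.ne_zero]
  ring
end

section
/- The set M = {(t_λ, t_λ) : λ ∈ Fˣ} × {1, δ} is a maximal abelian subgroup of semisimple elements of G = SL₂(F)² ⋊ ⟨δ⟩: it is abelian, and any element (f,g) ∈ SL₂(F)² commuting with all of M satisfies f = g ∈ T (the diagonal torus). -/
/-!
The pairs `(t_λ, t_λ)` commute with each other and with `δ`, and `M` consists of products of
these, so `M` is abelian.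
Conjugation by `δ` swaps the factors, so an element `(f, g)` centralising `δ` has `f = g`.
Centralising `(t_2, t_2)` makes `f` commute with `diag(2, 1/2)`; as `2 ≠ 1/2` in characteristic
zero, the off-diagonal entries of `f` vanish and `det f = 1` puts `f` in `T`.
-/

open Matrix

/-- The swap automorphism (f,g) ↦ (g,f) of SL₂(F)². -/
def swapAut (F : Type*) [Field F] :
    MulAut (Matrix.SpecialLinearGroup (Fin 2) F × Matrix.SpecialLinearGroup (Fin 2) F) :=
  MulEquiv.prodComm

/-- The action of ℤ₂ on SL₂(F)² whose generator acts by swapping the two factors. -/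
def swapHom (F : Type*) [Field F] : Multiplicative (ZMod 2) →*
    MulAut (Matrix.SpecialLinearGroup (Fin 2) F × Matrix.SpecialLinearGroup (Fin 2) F) where
  toFun x := if x.toAdd = 0 then 1 else swapAut F
  map_one' := by simp
  map_mul' x y := by
    have h : ∀ z : ZMod 2, z = 0 ∨ z = 1 := by decide
    have hswap : swapAut F * swapAut F = 1 := rfl
    have h11 : (1 + 1 : ZMod 2) = 0 := by decide
    have h10 : (1 : ZMod 2) ≠ 0 := by decide
    rcases h x.toAdd with hx | hx <;> rcases h y.toAdd with hy | hy <;>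
      simp_all [toAdd_mul, hx, hy, h11, h10]

/-- The group G = SL₂(F)² ⋊ ℤ₂, with the generator of ℤ₂ acting by swapping factors. -/
abbrev GrpG (F : Type*) [Field F] :=
  SemidirectProduct (Matrix.SpecialLinearGroup (Fin 2) F × Matrix.SpecialLinearGroup (Fin 2) F)
    (Multiplicative (ZMod 2)) (swapHom F)

/-- The element δ ∈ G generating the ℤ₂ factor. -/
def deltaG (F : Type*) [Field F] : GrpG F :=
  SemidirectProduct.inr (Multiplicative.ofAdd (1 : ZMod 2))

/-- t_{λ,μ} = (t_λ, t_μ) viewed inside G. -/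
def tPair (F : Type*) [Field F] (l m : Fˣ) : GrpG F :=
  SemidirectProduct.inl (torusSL F l, torusSL F m)

/-- The set M = {(t_λ,t_λ)} × {1, δ} ⊆ G = SL₂(F)² ⋊ ℤ₂. -/
def MSet (F : Type*) [Field F] : Set (GrpG F) :=
  {w | ∃ l : Fˣ, w = tPair F l l ∨ w = tPair F l l * deltaG F}

theorem Matrix.apply_eq_zero_of_diagonal_mul_eq_mul_diagonal {n R : Type*} [Fintype n]
    [DecidableEq n] [CommRing R] [NoZeroDivisors R] {d : n → R} {A : Matrix n n R}
    (h : diagonal d * A = A * diagonal d) {i j : n} (hij : d i ≠ d j) : A i j = 0 := by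
  have hij' : d i * A i j = A i j * d j := by
    simpa only [diagonal_mul, mul_diagonal] using congr_fun₂ h i j
  have : (d i - d j) * A i j = 0 := by linear_combination hij'
  exact (mul_eq_zero.mp this).resolve_left (sub_ne_zero.mpr hij)

section SL2

variable {F : Type*} [Field F]

theorem coe_torusSL (l : Fˣ) :
    (torusSL F l : Matrix (Fin 2) (Fin 2) F) = diagonal ![(l : F), ((l⁻¹ : Fˣ) : F)] := by
  ext i j
  fin_cases i <;> fin_cases j <;> rfl

theorem torusSL_commute (l m : Fˣ) : Commute (torusSL F l) (torusSL F m) := by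
  ext1
  simp only [Matrix.SpecialLinearGroup.coe_mul, coe_torusSL, diagonal_mul_diagonal, mul_comm]

theorem mem_torusSet_of_offDiag_eq_zero {f : Matrix.SpecialLinearGroup (Fin 2) F}
    (h01 : f 0 1 = 0) (h10 : f 1 0 = 0) : f ∈ torusSet F := by
  have hdet : f 0 0 * f 1 1 = 1 := by
    have := f.det_coe
    rwa [det_fin_two, h01, zero_mul, sub_zero] at this
  refine ⟨Units.mk0 _ (left_ne_zero_of_mul_eq_one hdet), ?_⟩
  ext i j
  fin_cases i <;> fin_cases j <;> simp [torusSL, h01, h10, eq_inv_of_mul_eq_one_right hdet]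

theorem mem_torusSet_of_commute_torusSL {l : Fˣ} (hl : (l : F) ≠ ((l⁻¹ : Fˣ) : F))
    {f : Matrix.SpecialLinearGroup (Fin 2) F} (h : Commute (torusSL F l) f) : f ∈ torusSet F := by
  have hmat : diagonal ![(l : F), ((l⁻¹ : Fˣ) : F)] * (f : Matrix (Fin 2) (Fin 2) F) =
      f * diagonal ![(l : F), ((l⁻¹ : Fˣ) : F)] := by
    rw [← coe_torusSL, ← Matrix.SpecialLinearGroup.coe_mul, h.eq,
      Matrix.SpecialLinearGroup.coe_mul]
  exact mem_torusSet_of_offDiag_eq_zero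
    (apply_eq_zero_of_diagonal_mul_eq_mul_diagonal hmat hl)
    (apply_eq_zero_of_diagonal_mul_eq_mul_diagonal hmat hl.symm)

end SL2

section GrpG

variable {F : Type*} [Field F]

theorem deltaG_mul_inl (f g : Matrix.SpecialLinearGroup (Fin 2) F) :
    deltaG F * SemidirectProduct.inl (f, g) = SemidirectProduct.inl (g, f) * deltaG F := by
  have hswap : swapHom F (Multiplicative.ofAdd 1) (f, g) = (g, f) := rfl
  rw [deltaG, ← hswap, SemidirectProduct.inl_aut, map_inv, inv_mul_cancel_right]

theorem commute_deltaG_tPair (l : Fˣ) : Commute (deltaG F) (tPair F l l) :=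
  deltaG_mul_inl _ _

theorem commute_tPair (l l' m m' : Fˣ) : Commute (tPair F l l') (tPair F m m') :=
  ((torusSL_commute l m).prod (torusSL_commute l' m')).map SemidirectProduct.inl

theorem commute_tPair_of_mem_MSet {a : GrpG F} (ha : a ∈ MSet F) (m : Fˣ) :
    Commute a (tPair F m m) := by
  obtain ⟨l, rfl | rfl⟩ := ha
  · exact commute_tPair l l m m
  · exact (commute_tPair l l m m).mul_left (commute_deltaG_tPair m)

theorem commute_deltaG_of_mem_MSet {a : GrpG F} (ha : a ∈ MSet F) : Commute a (deltaG F) := by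
  obtain ⟨l, rfl | rfl⟩ := ha
  · exact (commute_deltaG_tPair l).symm
  · exact (commute_deltaG_tPair l).symm.mul_left (Commute.refl _)

theorem MSet_commute {a b : GrpG F} (ha : a ∈ MSet F) (hb : b ∈ MSet F) : Commute a b := by
  obtain ⟨m, rfl | rfl⟩ := hb
  · exact commute_tPair_of_mem_MSet ha m
  · exact (commute_tPair_of_mem_MSet ha m).mul_right (commute_deltaG_of_mem_MSet ha)

theorem tPair_mem_MSet (l : Fˣ) : tPair F l l ∈ MSet F := ⟨l, .inl rfl⟩

theorem deltaG_mem_MSet : deltaG F ∈ MSet F :=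
  ⟨1, .inr (by rw [tPair, torusSL_one, Prod.mk_one_one, map_one, one_mul])⟩

theorem eq_of_commute_deltaG_inl {f g : Matrix.SpecialLinearGroup (Fin 2) F}
    (h : Commute (deltaG F) (SemidirectProduct.inl (f, g))) : f = g := by
  rw [Commute, SemiconjBy, deltaG_mul_inl] at h
  exact (Prod.ext_iff.mp (SemidirectProduct.inl_injective (mul_right_cancel h))).2

theorem commute_torusSL_of_commute_tPair_inl {l m : Fˣ}
    {f g : Matrix.SpecialLinearGroup (Fin 2) F}
    (h : Commute (tPair F l m) (SemidirectProduct.inl (f, g))) : Commute (torusSL F l) f :=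
  (Prod.commute_iff.mp (h.of_map SemidirectProduct.inl_injective)).1

end GrpG

theorem MSet_maximal_abelian_general {F : Type*} [Field F] [CharZero F] :
    (∀ a ∈ MSet F, ∀ b ∈ MSet F, a * b = b * a) ∧
    (∀ f g : Matrix.SpecialLinearGroup (Fin 2) F,
      (∀ w ∈ MSet F, w * SemidirectProduct.inl (f, g) =
        SemidirectProduct.inl (f, g) * w) →
      f = g ∧ f ∈ torusSet F) := by
  refine ⟨fun a ha b hb => MSet_commute ha hb, fun f g hcomm => ⟨?_, ?_⟩⟩
  · exact eq_of_commute_deltaG_inl (hcomm _ deltaG_mem_MSet)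
  · let two : Fˣ := Units.mk0 2 two_ne_zero
    have htwo : (two : F) ≠ ((two⁻¹ : Fˣ) : F) := by
      norm_num [two]
    exact mem_torusSet_of_commute_torusSL htwo
      (commute_torusSL_of_commute_tPair_inl (hcomm _ (tPair_mem_MSet two)))

/-- M is abelian, and any (f,g) ∈ SL₂(F)² commuting with all of M satisfies
f = g ∈ T, the diagonal torus. -/
theorem MSet_maximal_abelian {F : Type*} [Field F] [IsAlgClosed F] [CharZero F] :
    (∀ a ∈ MSet F, ∀ b ∈ MSet F, a * b = b * a) ∧
    (∀ f g : Matrix.SpecialLinearGroup (Fin 2) F,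
      (∀ w ∈ MSet F, w * SemidirectProduct.inl (f, g) =
        SemidirectProduct.inl (f, g) * w) →
      f = g ∧ f ∈ torusSet F) :=
  MSet_maximal_abelian_general
end
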